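/- arXiv:1803.11114 — 9 statements merged into one kernel-verified Lean document; each statement's English description precedes it below -/
import Mathlib

section
/- Let D be a preferential-attachment degree process started at time t₀. Let δ and t be real numbers with 0 < δ < 1, t ≥ 2/δ² and ⌊t⌋ ≥ t₀. Then for every natural number d with ℙ[D(⌊t⌋) = d] > 0, the conditional probability ℙ[ D(⌊(1+δ)t⌋) ≤ (1 + δ/2 − 2δ²)·d | D(⌊t⌋) = d ] is at most exp(−δ³·d/16). -/
open MeasureTheory ProbabilityTheory Real

/-- A preferential-attachment degree process started at time `t₀`, on a probability
space with filtration `ℱ`: an adapted `ℕ`-valued process `D` with `1 ≤ D t₀ ≤ 2 t₀` a.s.,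
increments in `{0,1}` a.s., and conditional increment probability
`D (s-1) / (2 s - 1)` given `ℱ (s-1)`. -/
structure PAProcess {Ω : Type*} [m0 : MeasurableSpace Ω] (μ : Measure Ω)
    (ℱ : Filtration ℕ m0) (t₀ : ℕ) where
  D : ℕ → Ω → ℕ
  adapted : ∀ s : ℕ, Measurable[ℱ s] (D s)
  init : ∀ᵐ ω ∂μ, 1 ≤ D t₀ ω ∧ D t₀ ω ≤ 2 * t₀
  incr : ∀ s : ℕ, t₀ < s → ∀ᵐ ω ∂μ, D s ω = D (s - 1) ω ∨ D s ω = D (s - 1) ω + 1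
  cond : ∀ s : ℕ, t₀ < s →
      μ[Set.indicator {ω' | D s ω' = D (s - 1) ω' + 1} (fun _ => (1 : ℝ)) | ℱ (s - 1)]
        =ᵐ[μ] fun ω => (D (s - 1) ω : ℝ) / (2 * s - 1)

/-!
On `A = {D ⌊t⌋ = d}` the process stays `≥ d`. Given `ℱ (s - 1)`, a jump has probability
`D (s - 1) / (2 s - 1)` and multiplies `exp (-δ D)` by `exp (-δ)`, so each step multiplies
`∫_A exp (-δ D s)` by at most `1 - (1 - e^{-δ}) d / (2 s - 1) ≤ exp (-(1 - e^{-δ}) d / (2 s - 1))`.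
The `≈ δ t` steps up to `⌊(1 + δ) t⌋` thus give `E [exp (-δ D ⌊(1 + δ) t⌋) | A] ≤ exp (-δ d - κ d)`
with `κ ≥ δ² (2 - δ) / (4 (1 + δ)²)`, and the Chernoff bound at `-δ` turns this into the lower-tail
estimate.
-/

theorem div_one_add_le_one_sub_exp_neg {x : ℝ} (hx : 0 ≤ x) : x / (1 + x) ≤ 1 - exp (-x) := by
  have h : exp (-x) ≤ (1 + x)⁻¹ := by
    rw [exp_neg]
    exact inv_anti₀ (by positivity) (by linarith [add_one_le_exp x])
  have : x / (1 + x) = 1 - (1 + x)⁻¹ := by field_simp; ring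
  linarith

theorem le_floor_mul_sub_floor_div {δ t : ℝ} (hδ0 : 0 < δ) (hδ1 : δ < 1) (ht : 2 / δ ^ 2 ≤ t) :
    δ * (2 - δ) / (4 * (1 + δ)) ≤
      ((⌊(1 + δ) * t⌋₊ : ℝ) - ⌊t⌋₊) / (2 * ⌊(1 + δ) * t⌋₊ - 1) := by
  have hδt : 2 ≤ δ ^ 2 * t := by rwa [div_le_iff₀' (by positivity)] at ht
  have ht0 : 0 < t := by nlinarith
  have hT : (⌊t⌋₊ : ℝ) ≤ t := Nat.floor_le ht0.le
  have hT'le : (⌊(1 + δ) * t⌋₊ : ℝ) ≤ (1 + δ) * t := Nat.floor_le (by positivity)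
  have hT'gt : (1 + δ) * t - 1 < ⌊(1 + δ) * t⌋₊ := by
    linarith [Nat.lt_floor_add_one ((1 + δ) * t)]
  have hden : 0 < 2 * (⌊(1 + δ) * t⌋₊ : ℝ) - 1 := by nlinarith
  rw [div_le_div_iff₀ (by positivity) hden]
  nlinarith

theorem chernoff_exponent_le {δ c ρ d : ℝ} (hδ0 : 0 < δ) (hδ1 : δ < 1) (hc : δ / (1 + δ) ≤ c)
    (hρ : δ * (2 - δ) / (4 * (1 + δ)) ≤ ρ) (hd : 0 ≤ d) :
    δ * ((1 + δ / 2 - 2 * δ ^ 2) * d) - c * d * ρ - δ * d ≤ -(δ ^ 3 * d) / 16 := by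
  have h2δ : 0 < 2 - δ := by linarith
  have hcρ : δ / (1 + δ) * (δ * (2 - δ) / (4 * (1 + δ))) ≤ c * ρ :=
    mul_le_mul hc hρ (by positivity) ((by positivity : 0 ≤ δ / (1 + δ)).trans hc)
  -- `δ ^ 2 / 2 - 31 * δ ^ 3 / 16 = δ * (δ / 2 - 2 * δ ^ 2) + δ ^ 3 / 16`
  have key : δ ^ 2 / 2 - 31 * δ ^ 3 / 16 ≤ δ / (1 + δ) * (δ * (2 - δ) / (4 * (1 + δ))) := by
    rw [div_mul_div_comm, le_div_iff₀ (by positivity)]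
    nlinarith [pow_pos hδ0 3, pow_pos hδ0 4, pow_pos hδ0 5]
  nlinarith [mul_le_mul_of_nonneg_right (key.trans hcρ) hd]

theorem measureReal_cond_le_le_exp_mul_setIntegral {Ω : Type*} [MeasurableSpace Ω]
    {μ : Measure Ω} [IsFiniteMeasure μ] {A : Set Ω} (hA : μ A ≠ 0) {X : Ω → ℝ} {l : ℝ}
    (hl : 0 ≤ l) (h_int : IntegrableOn (fun ω => exp (-l * X ω)) A μ) (a : ℝ) :
    (μ[|A]).real {ω | X ω ≤ a} ≤
      exp (l * a) * ((μ A).toReal⁻¹ * ∫ ω in A, exp (-l * X ω) ∂μ) := by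
  have hcond : μ[|A] = (μ A)⁻¹ • μ.restrict A := rfl
  have h_int' : Integrable (fun ω => exp (-l * X ω)) μ[|A] := by
    rw [hcond]
    exact h_int.smul_measure (ENNReal.inv_ne_top.mpr hA)
  have := measure_le_le_exp_mul_mgf a (neg_nonpos.mpr hl) h_int'
  rwa [neg_neg, mgf, hcond, integral_smul_measure, ENNReal.toReal_inv, smul_eq_mul] at this

namespace PAProcess

variable {Ω : Type*} [m0 : MeasurableSpace Ω] {μ : Measure Ω} {ℱ : Filtration ℕ m0} {t₀ : ℕ}
  (P : PAProcess μ ℱ t₀)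

theorem measurable_D (s : ℕ) : Measurable (P.D s) :=
  (P.adapted s).mono (ℱ.le s) le_rfl

theorem ae_monotoneOn : ∀ᵐ ω ∂μ, MonotoneOn (fun s => P.D s ω) (Set.Ici t₀) := by
  have hstep : ∀ᵐ ω ∂μ, ∀ s, t₀ < s + 1 → P.D s ω ≤ P.D (s + 1) ω := by
    rw [ae_all_iff]
    intro s
    by_cases hs : t₀ < s + 1
    · filter_upwards [P.incr (s + 1) hs] with ω hω _
      rcases hω with h | h <;> simp only [Nat.add_sub_cancel] at h <;> omega
    · exact .of_forall fun _ h => absurd h hs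
  filter_upwards [hstep] with ω hω
  exact monotoneOn_of_le_add_one Set.ordConnected_Ici fun s _ hs _ =>
    hω s (by rw [Set.mem_Ici] at hs; omega)

noncomputable def jump (s : ℕ) : Ω → ℝ :=
  {ω | P.D s ω = P.D (s - 1) ω + 1}.indicator fun _ => 1

theorem integrable_jump [IsFiniteMeasure μ] (s : ℕ) : Integrable (P.jump s) μ :=
  (integrable_const (1 : ℝ)).indicator
    (measurableSet_eq_fun (P.measurable_D s) ((P.measurable_D (s - 1)).add_const 1))

theorem condExp_mul_jump [IsFiniteMeasure μ] {s : ℕ} (hs : t₀ < s) {g : Ω → ℝ} {C : ℝ}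
    (hg : StronglyMeasurable[ℱ (s - 1)] g) (hgC : ∀ ω, ‖g ω‖ ≤ C) :
    μ[g * P.jump s | ℱ (s - 1)] =ᵐ[μ] fun ω => g ω * (P.D (s - 1) ω / (2 * s - 1)) := by
  filter_upwards [condExp_stronglyMeasurable_mul_of_bound (ℱ.le _) hg (P.integrable_jump s) C
    (.of_forall hgC), P.cond s hs] with ω h_pull h_cond
  rw [h_pull, Pi.mul_apply, jump, h_cond]

theorem exp_neg_mul_D_eq {s : ℕ} (hs : t₀ < s) (l : ℝ) :
    ∀ᵐ ω ∂μ, exp (-l * P.D s ω) =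
      exp (-l * P.D (s - 1) ω) * (1 - (1 - exp (-l)) * P.jump s ω) := by
  filter_upwards [P.incr s hs] with ω hω
  rcases hω with h | h
  · have hj : P.jump s ω = 0 := by simp [jump, h]
    rw [hj, h]
    ring
  · have hj : P.jump s ω = 1 := by simp [jump, h]
    rw [hj, h, Nat.cast_succ, mul_add, mul_one, exp_add]
    ring

theorem stronglyMeasurable_exp_neg_mul_D (l : ℝ) (s : ℕ) :
    StronglyMeasurable[ℱ s] fun ω => exp (-l * P.D s ω) :=
  (measurable_exp.comp
    (measurable_const.mul (measurable_from_nat.comp (P.adapted s)))).stronglyMeasurable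

theorem norm_exp_neg_mul_D_le {l : ℝ} (hl : 0 ≤ l) (s : ℕ) (ω : Ω) :
    ‖exp (-l * P.D s ω)‖ ≤ 1 := by
  rw [norm_of_nonneg (exp_pos _).le, exp_le_one_iff]
  exact mul_nonpos_of_nonpos_of_nonneg (neg_nonpos.mpr hl) (Nat.cast_nonneg _)

variable [IsFiniteMeasure μ]

theorem integrable_exp_neg_mul_D {l : ℝ} (hl : 0 ≤ l) (s : ℕ) :
    Integrable (fun ω => exp (-l * P.D s ω)) μ :=
  (integrable_const (1 : ℝ)).mono'
    ((P.stronglyMeasurable_exp_neg_mul_D l s).mono (ℱ.le s)).aestronglyMeasurable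
    (.of_forall (P.norm_exp_neg_mul_D_le hl s))

theorem integrable_exp_neg_mul_D_mul_jump {l : ℝ} (hl : 0 ≤ l) (s : ℕ) :
    Integrable ((fun ω => exp (-l * P.D (s - 1) ω)) * P.jump s) μ :=
  (P.integrable_jump s).bdd_mul
    ((P.stronglyMeasurable_exp_neg_mul_D l (s - 1)).mono (ℱ.le _)).aestronglyMeasurable
    (.of_forall (P.norm_exp_neg_mul_D_le hl (s - 1)))

theorem condExp_exp_neg_mul_D_mul_jump {s : ℕ} (hs : t₀ < s) {l : ℝ} (hl : 0 ≤ l) :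
    μ[(fun ω => exp (-l * P.D (s - 1) ω)) * P.jump s | ℱ (s - 1)] =ᵐ[μ]
      fun ω => exp (-l * P.D (s - 1) ω) * (P.D (s - 1) ω / (2 * s - 1)) :=
  P.condExp_mul_jump hs (P.stronglyMeasurable_exp_neg_mul_D l (s - 1))
    (P.norm_exp_neg_mul_D_le hl (s - 1))

theorem integrable_exp_neg_mul_D_mul_D {s : ℕ} (hs : t₀ < s) {l : ℝ} (hl : 0 ≤ l) :
    Integrable (fun ω => exp (-l * P.D (s - 1) ω) * (P.D (s - 1) ω / (2 * s - 1))) μ :=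
  integrable_condExp.congr (P.condExp_exp_neg_mul_D_mul_jump hs hl)

theorem setIntegral_exp_neg_mul_D {s : ℕ} (hs : t₀ < s) {l : ℝ} (hl : 0 ≤ l)
    {A : Set Ω} (hA : MeasurableSet[ℱ (s - 1)] A) :
    ∫ ω in A, exp (-l * P.D s ω) ∂μ = ∫ ω in A, exp (-l * P.D (s - 1) ω) *
      (1 - (1 - exp (-l)) * (P.D (s - 1) ω / (2 * s - 1))) ∂μ := by
  set g : Ω → ℝ := fun ω => exp (-l * P.D (s - 1) ω)
  have hg_int : IntegrableOn g A μ := (P.integrable_exp_neg_mul_D hl (s - 1)).integrableOn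
  calc ∫ ω in A, exp (-l * P.D s ω) ∂μ
      = ∫ ω in A, g ω - (1 - exp (-l)) * (g * P.jump s) ω ∂μ := by
        refine integral_congr_ae (ae_restrict_of_ae ?_)
        filter_upwards [P.exp_neg_mul_D_eq hs l] with ω hω
        rw [hω, Pi.mul_apply]
        ring
    _ = ∫ ω in A, g ω ∂μ - (1 - exp (-l)) * ∫ ω in A, (g * P.jump s) ω ∂μ := by
        rw [integral_sub hg_int
          ((P.integrable_exp_neg_mul_D_mul_jump hl s).integrableOn.const_mul _),
          integral_const_mul]
    _ = ∫ ω in A, g ω ∂μ -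
          (1 - exp (-l)) * ∫ ω in A, g ω * (P.D (s - 1) ω / (2 * s - 1)) ∂μ := by
        rw [← setIntegral_condExp (ℱ.le _) (P.integrable_exp_neg_mul_D_mul_jump hl s) hA,
          integral_congr_ae (ae_restrict_of_ae (P.condExp_exp_neg_mul_D_mul_jump hs hl))]
    _ = _ := by
        rw [← integral_const_mul, ← integral_sub hg_int
          ((P.integrable_exp_neg_mul_D_mul_D hs hl).integrableOn.const_mul _)]
        congr 1 with ω
        ring

theorem setIntegral_exp_neg_mul_D_le_step {s : ℕ} (hs : t₀ < s) {l : ℝ}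
    (hl : 0 ≤ l) {A : Set Ω} (hA : MeasurableSet[ℱ (s - 1)] A) {d : ℕ}
    (hAd : ∀ᵐ ω ∂μ, ω ∈ A → d ≤ P.D (s - 1) ω) :
    ∫ ω in A, exp (-l * P.D s ω) ∂μ ≤
      exp (-((1 - exp (-l)) * d / (2 * s - 1))) * ∫ ω in A, exp (-l * P.D (s - 1) ω) ∂μ := by
  have hc : 0 ≤ 1 - exp (-l) := by linarith [exp_le_one_iff.mpr (neg_nonpos.mpr hl)]
  have hden : 0 < 2 * (s : ℝ) - 1 := by
    have : (1 : ℝ) ≤ s := by exact_mod_cast (by omega : 1 ≤ s)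
    linarith
  have hint : Integrable (fun ω => exp (-l * P.D (s - 1) ω) *
      (1 - (1 - exp (-l)) * (P.D (s - 1) ω / (2 * s - 1)))) μ := by
    convert (P.integrable_exp_neg_mul_D hl (s - 1)).sub
      ((P.integrable_exp_neg_mul_D_mul_D hs hl).const_mul (1 - exp (-l))) using 1
    ext ω
    simp only [Pi.sub_apply]
    ring
  rw [P.setIntegral_exp_neg_mul_D hs hl hA, ← integral_const_mul]
  refine setIntegral_mono_on_ae hint.integrableOn
    ((P.integrable_exp_neg_mul_D hl (s - 1)).integrableOn.const_mul _) (ℱ.le _ _ hA) ?_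
  filter_upwards [hAd] with ω hω hωA
  have hfactor : 1 - (1 - exp (-l)) * (P.D (s - 1) ω / (2 * s - 1)) ≤
      exp (-((1 - exp (-l)) * d / (2 * s - 1))) := by
    have hdD : (d : ℝ) ≤ P.D (s - 1) ω := by exact_mod_cast hω hωA
    have : (1 - exp (-l)) * d / (2 * s - 1) ≤
        (1 - exp (-l)) * (P.D (s - 1) ω / (2 * s - 1)) := by
      rw [← mul_div_assoc]
      gcongr
    linarith [add_one_le_exp (-((1 - exp (-l)) * d / (2 * s - 1)))]
  exact (mul_comm _ _).trans_le (mul_le_mul_of_nonneg_right hfactor (exp_pos _).le)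

theorem setIntegral_exp_neg_mul_D_le {l : ℝ} (hl : 0 ≤ l) {T N : ℕ}
    (hT : t₀ ≤ T) {A : Set Ω} (hA : MeasurableSet[ℱ T] A) {d : ℕ}
    (hAd : ∀ᵐ ω ∂μ, ω ∈ A → d ≤ P.D T ω) {s : ℕ} (hTs : T ≤ s) (hsN : s ≤ N) :
    ∫ ω in A, exp (-l * P.D s ω) ∂μ ≤
      exp (-((1 - exp (-l)) * d * (s - T) / (2 * N - 1))) * ∫ ω in A, exp (-l * P.D T ω) ∂μ := by
  induction s, hTs using Nat.le_induction with
  | base => simp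
  | succ s hTs ih =>
    have hAd_s : ∀ᵐ ω ∂μ, ω ∈ A → d ≤ P.D s ω := by
      filter_upwards [hAd, P.ae_monotoneOn] with ω hω hmono hωA
      exact (hω hωA).trans (hmono hT (hT.trans hTs) hTs)
    have hstep := P.setIntegral_exp_neg_mul_D_le_step (s := s + 1) (by omega) hl
      (ℱ.mono hTs _ hA) hAd_s
    rw [Nat.add_sub_cancel] at hstep
    have hfactor : exp (-((1 - exp (-l)) * d / (2 * (s + 1 : ℕ) - 1))) ≤
        exp (-((1 - exp (-l)) * d / (2 * N - 1))) := by
      have hc : 0 ≤ 1 - exp (-l) := by linarith [exp_le_one_iff.mpr (neg_nonpos.mpr hl)]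
      have : ((s + 1 : ℕ) : ℝ) ≤ N := by exact_mod_cast hsN
      have : (1 : ℝ) ≤ (s + 1 : ℕ) := by exact_mod_cast Nat.le_add_left 1 s
      gcongr
      linarith
    calc ∫ ω in A, exp (-l * P.D (s + 1) ω) ∂μ
        ≤ exp (-((1 - exp (-l)) * d / (2 * N - 1))) * ∫ ω in A, exp (-l * P.D s ω) ∂μ :=
          hstep.trans (mul_le_mul_of_nonneg_right hfactor
            (integral_nonneg fun _ => (exp_pos _).le))
      _ ≤ exp (-((1 - exp (-l)) * d / (2 * N - 1))) *
          (exp (-((1 - exp (-l)) * d * (s - T) / (2 * N - 1))) *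
            ∫ ω in A, exp (-l * P.D T ω) ∂μ) :=
          mul_le_mul_of_nonneg_left (ih (by omega)) (exp_pos _).le
      _ = _ := by
          rw [← mul_assoc, ← exp_add]
          push_cast
          ring_nf

theorem measureReal_cond_D_le_le {l : ℝ} (hl : 0 ≤ l) {T N : ℕ} (hT : t₀ ≤ T) (hTN : T ≤ N)
    {d : ℕ} (hd : μ {ω | P.D T ω = d} ≠ 0) (a : ℝ) :
    (μ[|{ω | P.D T ω = d}]).real {ω | (P.D N ω : ℝ) ≤ a} ≤
      exp (l * a - (1 - exp (-l)) * d * ((N - T) / (2 * N - 1)) - l * d) := by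
  set A := {ω | P.D T ω = d}
  have hA : MeasurableSet[ℱ T] A := P.adapted T (measurableSet_singleton d)
  have hμA : 0 < (μ A).toReal := ENNReal.toReal_pos hd (measure_ne_top μ A)
  have hdecay := P.setIntegral_exp_neg_mul_D_le hl hT hA
    (.of_forall fun ω (hω : P.D T ω = d) => hω.ge) hTN le_rfl
  have hinit : ∫ ω in A, exp (-l * P.D T ω) ∂μ = exp (-l * d) * (μ A).toReal := by
    rw [setIntegral_congr_fun (ℱ.le T _ hA) fun ω (hω : P.D T ω = d) => by rw [hω],
      setIntegral_const, smul_eq_mul, mul_comm, measureReal_def]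
  calc (μ[|A]).real {ω | (P.D N ω : ℝ) ≤ a}
      ≤ exp (l * a) * ((μ A).toReal⁻¹ * ∫ ω in A, exp (-l * P.D N ω) ∂μ) :=
        measureReal_cond_le_le_exp_mul_setIntegral hd hl
          (P.integrable_exp_neg_mul_D hl N).integrableOn a
    _ ≤ exp (l * a) * ((μ A).toReal⁻¹ *
          (exp (-((1 - exp (-l)) * d * (N - T) / (2 * N - 1))) *
            (exp (-l * d) * (μ A).toReal))) := by
        rw [← hinit]
        gcongr
    _ = _ := by
        rw [exp_sub, exp_sub, ← mul_div_assoc, exp_neg, neg_mul, exp_neg (l * d)]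
        field_simp

end PAProcess

theorem short_term_lower_bound_general
    {Ω : Type*} [m0 : MeasurableSpace Ω] (μ : Measure Ω) [IsProbabilityMeasure μ]
    (ℱ : Filtration ℕ m0) (t₀ : ℕ)
    (P : PAProcess μ ℱ t₀)
    (δ t : ℝ) (hδ0 : 0 < δ) (hδ1 : δ < 1) (ht : 2 / δ ^ 2 ≤ t) (ht₀' : t₀ ≤ ⌊t⌋₊)
    (d : ℕ) (hd : 0 < μ {ω | P.D ⌊t⌋₊ ω = d}) :
    (μ[|{ω | P.D ⌊t⌋₊ ω = d}]
        {ω | (P.D ⌊(1 + δ) * t⌋₊ ω : ℝ) ≤ (1 + δ / 2 - 2 * δ ^ 2) * d}).toReal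
      ≤ Real.exp (-(δ ^ 3 * d) / 16) := by
  have hTT' : ⌊t⌋₊ ≤ ⌊(1 + δ) * t⌋₊ :=
    Nat.floor_le_floor (by nlinarith [div_pos two_pos (pow_pos hδ0 2)])
  calc _ ≤ _ := P.measureReal_cond_D_le_le hδ0.le ht₀' hTT' hd.ne' _
    _ ≤ exp (-(δ ^ 3 * d) / 16) :=
        exp_le_exp.mpr (chernoff_exponent_le hδ0 hδ1 (div_one_add_le_one_sub_exp_neg hδ0.le)
          (le_floor_mul_sub_floor_div hδ0 hδ1 ht) d.cast_nonneg)

theorem short_term_lower_bound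
    {Ω : Type*} [m0 : MeasurableSpace Ω] (μ : Measure Ω) [IsProbabilityMeasure μ]
    (ℱ : Filtration ℕ m0) (t₀ : ℕ) (ht₀ : 1 ≤ t₀)
    (P : PAProcess μ ℱ t₀)
    (δ t : ℝ) (hδ0 : 0 < δ) (hδ1 : δ < 1) (ht : 2 / δ ^ 2 ≤ t) (ht₀' : t₀ ≤ ⌊t⌋₊)
    (d : ℕ) (hd : 0 < μ {ω | P.D ⌊t⌋₊ ω = d}) :
    (μ[|{ω | P.D ⌊t⌋₊ ω = d}]
        {ω | (P.D ⌊(1 + δ) * t⌋₊ ω : ℝ) ≤ (1 + δ / 2 - 2 * δ ^ 2) * d}).toReal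
      ≤ Real.exp (-(δ ^ 3 * d) / 16) :=
  short_term_lower_bound_general (m0 := m0) μ ℱ t₀ P δ t hδ0 hδ1 ht ht₀' d hd
end

section
/- Let 0 < ε ≤ 1/8, let t > 0 be real, and let f : ℝ → ℝ be a monotone increasing nonnegative function. For every integer k ≥ 1 define δₖ = ε/k^{2/3}, hₖ = ∏_{i=1}^{k−1}(1 + δᵢ), and cₖ = ∏_{i=1}^{k−1}(1 + δᵢ/2 − 2δᵢ²). If there exists a natural number n with t < n and f(n) < (1−ε)·√(n/t)·f(t), then there exists an integer k ≥ 1 such that f((1+δₖ)·hₖ·t) < (1 + δₖ/2 − 2δₖ²)·f(hₖ·t) and f(hₖ·t) ≥ cₖ·f(t). -/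
/-!
Choose `k ≥ 1` with `h k * t ≤ n < h (k + 1) * t`; it exists because `∑ δ i` diverges, so the
points `h k * t` are unbounded. One shows `(1 - ε)² (1 + δ k) h k ≤ (c k)²`, hence
`(1 - ε) √(n / t) ≤ c k` and `f (h k * t) ≤ f n < c k * f t`. So the lower bound
`c k * f t ≤ f (h k * t)`, true for `k = 1`, fails at some index; at the last index where it holds,
the step inequality must fail, since `h (k + 1) = (1 + δ k) h k` and
`c (k + 1) = (1 + δ k / 2 - 2 δ k²) c k` would otherwise propagate the bound.

The estimate on `c k` combines `(1 + δ)(1 - 2δ²)² ≤ (1 + δ/2 - 2δ²)²` factorwise, Weierstrass'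
inequality `1 - 2 ∑ δ i² ≤ ∏ (1 - 2 δ i²)`, and `∑_{i ≤ m} i^{-4/3} ≤ 4 - 3 m^{-1/3}`, obtained by
comparing each term with `∫ s^{-4/3} ds` over `[i - 1, i]`.
-/

open Finset Real

lemma rpow_one_third_pow {a : ℝ} (ha : 0 ≤ a) (n : ℕ) :
    (a ^ ((1 : ℝ) / 3)) ^ n = a ^ ((n : ℝ) / 3) := by
  rw [← rpow_natCast, ← rpow_mul ha]
  ring_nf

lemma rpow_two_thirds_eq_sq {a : ℝ} (ha : 0 ≤ a) :
    a ^ ((2 : ℝ) / 3) = (a ^ ((1 : ℝ) / 3)) ^ 2 := by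
  rw [rpow_one_third_pow ha]
  norm_num

lemma one_div_pow_four_le_three_div_sub_three_div {x y : ℝ} (hx : 0 < x) (hxy : x ≤ y)
    (h3 : y ^ 3 = x ^ 3 + 1) : 1 / y ^ 4 ≤ 3 / x - 3 / y := by
  have hy : 0 < y := hx.trans_le hxy
  have hfac : (y - x) * (y ^ 2 + x * y + x ^ 2) = 1 := by linear_combination h3
  calc 1 / y ^ 4 ≤ 3 / (x * y * (y ^ 2 + x * y + x ^ 2)) := by
        rw [div_le_div_iff₀ (by positivity) (by positivity)]
        nlinarith [mul_le_mul hxy hxy hx.le hy.le, mul_pos hx hy]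
    _ = 3 / x - 3 / y := by
        field_simp
        linear_combination -hfac

lemma sum_Icc_one_div_rpow_pow_four_le {m : ℕ} (hm : 1 ≤ m) :
    ∑ i ∈ Icc 1 m, 1 / ((i : ℝ) ^ ((1 : ℝ) / 3)) ^ 4 ≤ 4 - 3 / (m : ℝ) ^ ((1 : ℝ) / 3) := by
  induction m, hm using Nat.le_induction with
  | base => norm_num
  | succ m hm ih =>
    have hx : 0 < (m : ℝ) ^ ((1 : ℝ) / 3) := by positivity
    have hxy : (m : ℝ) ^ ((1 : ℝ) / 3) ≤ ((m + 1 : ℕ) : ℝ) ^ ((1 : ℝ) / 3) :=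
      rpow_le_rpow (Nat.cast_nonneg m) (by simp) (by norm_num)
    have h3 : (((m + 1 : ℕ) : ℝ) ^ ((1 : ℝ) / 3)) ^ 3 = ((m : ℝ) ^ ((1 : ℝ) / 3)) ^ 3 + 1 := by
      simp only [rpow_one_third_pow (Nat.cast_nonneg _)]
      norm_num
    rw [sum_Icc_succ_top (by omega)]
    linarith [one_div_pow_four_le_three_div_sub_three_div hx hxy h3]

lemma one_sub_sum_le_prod_one_sub {ι R : Type*} [CommRing R] [LinearOrder R]
    [IsStrictOrderedRing R] {s : Finset ι} {a : ι → R} (h0 : ∀ i ∈ s, 0 ≤ a i)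
    (h1 : ∀ i ∈ s, a i ≤ 1) : 1 - ∑ i ∈ s, a i ≤ ∏ i ∈ s, (1 - a i) := by
  classical
  induction s using Finset.induction_on with
  | empty => simp
  | insert j s hj ih =>
    rw [prod_insert hj, sum_insert hj]
    have hs := ih (fun i hi => h0 i (mem_insert_of_mem hi)) fun i hi => h1 i (mem_insert_of_mem hi)
    have hj0 := h0 j (mem_insert_self j s)
    have hj1 := h1 j (mem_insert_self j s)
    have hsum : 0 ≤ ∑ i ∈ s, a i := sum_nonneg fun i hi => h0 i (mem_insert_of_mem hi)
    nlinarith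

lemma exists_le_lt_succ {α : Type*} [LinearOrder α] {g : ℕ → α} {x : α} (h0 : g 0 ≤ x)
    (hx : ∃ m, x < g m) : ∃ m, g m ≤ x ∧ x < g (m + 1) := by
  by_contra! hstep
  obtain ⟨m, hm⟩ := hx
  have hall (m : ℕ) : g m ≤ x := by
    induction m with
    | zero => exact h0
    | succ m ih => exact hstep m ih
  exact (hall m).not_gt hm

lemma exists_lt_mul_and_prod_mul_le {R : Type*} [CommRing R] [LinearOrder R]
    [IsStrictOrderedRing R] {F b : ℕ → R} (hb : ∀ m, 0 ≤ b (m + 1))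
    (hfail : ∃ m, F m < (∏ i ∈ Icc 1 m, b i) * F 0) :
    ∃ m, F (m + 1) < b (m + 1) * F m ∧ (∏ i ∈ Icc 1 m, b i) * F 0 ≤ F m := by
  by_contra! hstep
  obtain ⟨m, hm⟩ := hfail
  have hall (m : ℕ) : (∏ i ∈ Icc 1 m, b i) * F 0 ≤ F m := by
    induction m with
    | zero => simp
    | succ m ih =>
      calc (∏ i ∈ Icc 1 (m + 1), b i) * F 0 = b (m + 1) * ((∏ i ∈ Icc 1 m, b i) * F 0) := by
            rw [prod_Icc_succ_top (by omega)]; ring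
        _ ≤ b (m + 1) * F m := mul_le_mul_of_nonneg_left ih (hb m)
        _ ≤ F (m + 1) := not_lt.1 fun hlt => (hstep m hlt).not_ge ih
  exact (hall m).not_gt hm

lemma one_add_mul_one_sub_sq_le {d : ℝ} (hd0 : 0 ≤ d) (hd : d ≤ 1 / 2) :
    (1 + d) * (1 - 2 * d ^ 2) ^ 2 ≤ (1 + d / 2 - 2 * d ^ 2) ^ 2 := by
  have hdiff : (1 + d / 2 - 2 * d ^ 2) ^ 2 - (1 + d) * (1 - 2 * d ^ 2) ^ 2
      = d ^ 2 * (1 / 4 + 2 * d - 4 * d ^ 3) := by ring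
  have hcube : 4 * d ^ 3 ≤ d := by nlinarith
  nlinarith [sq_nonneg d]

lemma one_sub_mul_one_add_le {ε u v : ℝ} (hε0 : 0 ≤ ε) (hε : ε ≤ 1 / 8) (hv0 : 0 ≤ v)
    (hv : v ≤ 2) (hvu : v ≤ u) : (1 - ε) * (1 + ε * v / 2) ≤ 1 - 2 * ε ^ 2 * (4 - 3 * u) := by
  have hdiff : 1 - 2 * ε ^ 2 * (4 - 3 * u) - (1 - ε) * (1 + ε * v / 2)
      = ε * (1 - 8 * ε) * (1 - v / 2) + ε ^ 2 * (6 * u - 7 / 2 * v) := by ring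
  have h1 : 0 ≤ ε * (1 - 8 * ε) * (1 - v / 2) :=
    mul_nonneg (mul_nonneg hε0 (by linarith)) (by linarith)
  have h2 : 0 ≤ ε ^ 2 * (6 * u - 7 / 2 * v) := mul_nonneg (sq_nonneg ε) (by linarith)
  linarith

section

variable {ε : ℝ} {δ : ℕ → ℝ}

lemma delta_pos (hδ : ∀ i : ℕ, δ i = ε / (i : ℝ) ^ ((2 : ℝ) / 3)) (hε : 0 < ε) {i : ℕ}
    (hi : 1 ≤ i) : 0 < δ i := by
  have : (0 : ℝ) < i := by exact_mod_cast hi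
  rw [hδ]
  positivity

lemma delta_le (hδ : ∀ i : ℕ, δ i = ε / (i : ℝ) ^ ((2 : ℝ) / 3)) (hε : 0 ≤ ε) {i : ℕ}
    (hi : 1 ≤ i) : δ i ≤ ε := by
  rw [hδ]
  exact div_le_self hε (one_le_rpow (by exact_mod_cast hi) (by norm_num))

lemma one_add_delta_div_two_sub_pos (hδ : ∀ i : ℕ, δ i = ε / (i : ℝ) ^ ((2 : ℝ) / 3))
    (hε0 : 0 < ε) (hε : ε ≤ 1 / 8) {i : ℕ} (hi : 1 ≤ i) : 0 < 1 + δ i / 2 - 2 * δ i ^ 2 := by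
  nlinarith [delta_pos hδ hε0 hi, delta_le hδ hε0.le hi]

lemma sum_two_mul_delta_sq_le (hδ : ∀ i : ℕ, δ i = ε / (i : ℝ) ^ ((2 : ℝ) / 3)) {m : ℕ}
    (hm : 1 ≤ m) :
    ∑ i ∈ Icc 1 m, 2 * δ i ^ 2 ≤ 2 * ε ^ 2 * (4 - 3 / (m : ℝ) ^ ((1 : ℝ) / 3)) := by
  calc ∑ i ∈ Icc 1 m, 2 * δ i ^ 2
      = 2 * ε ^ 2 * ∑ i ∈ Icc 1 m, 1 / ((i : ℝ) ^ ((1 : ℝ) / 3)) ^ 4 := by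
        rw [mul_sum]
        refine sum_congr rfl fun i _ => ?_
        rw [hδ, rpow_two_thirds_eq_sq (Nat.cast_nonneg i)]
        ring
    _ ≤ 2 * ε ^ 2 * (4 - 3 / (m : ℝ) ^ ((1 : ℝ) / 3)) := by
        gcongr
        exact sum_Icc_one_div_rpow_pow_four_le hm

lemma one_sub_mul_one_add_delta_le (hδ : ∀ i : ℕ, δ i = ε / (i : ℝ) ^ ((2 : ℝ) / 3))
    (hε0 : 0 ≤ ε) (hε : ε ≤ 1 / 8) (m : ℕ) :
    (1 - ε) * (1 + δ (m + 1) / 2) ≤ 1 - ∑ i ∈ Icc 1 m, 2 * δ i ^ 2 := by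
  rcases Nat.eq_zero_or_pos m with rfl | hm
  · have hδ1 : δ 1 = ε := by simp [hδ]
    simp only [zero_add, hδ1, Icc_eq_empty_of_lt zero_lt_one, sum_empty, sub_zero]
    nlinarith
  set x := (m : ℝ) ^ ((1 : ℝ) / 3)
  set y := ((m + 1 : ℕ) : ℝ) ^ ((1 : ℝ) / 3)
  have hx : 0 < x := by positivity
  have hxy : x ≤ y := rpow_le_rpow (Nat.cast_nonneg m) (by simp) (by norm_num)
  have hy : 1 ≤ y := one_le_rpow (by simp) (by norm_num)
  have hδy : δ (m + 1) = ε * (1 / y ^ 2) := by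
    rw [hδ, rpow_two_thirds_eq_sq (Nat.cast_nonneg _)]
    ring
  have hvu : 1 / y ^ 2 ≤ 1 / x := one_div_le_one_div_of_le hx (by nlinarith)
  have hv : 1 / y ^ 2 ≤ 2 := by
    rw [div_le_iff₀ (by positivity)]
    nlinarith
  calc (1 - ε) * (1 + δ (m + 1) / 2) ≤ 1 - 2 * ε ^ 2 * (4 - 3 * (1 / x)) := by
        rw [hδy]
        exact one_sub_mul_one_add_le hε0 hε (by positivity) hv hvu
    _ ≤ 1 - ∑ i ∈ Icc 1 m, 2 * δ i ^ 2 := by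
        rw [mul_one_div]
        linarith [sum_two_mul_delta_sq_le hδ hm]

lemma one_add_mul_le_prod_one_add_delta (hδ : ∀ i : ℕ, δ i = ε / (i : ℝ) ^ ((2 : ℝ) / 3))
    (hε : 0 ≤ ε) (M : ℕ) : 1 + ε * M ≤ ∏ i ∈ Icc 1 (M ^ 3), (1 + δ i) := by
  rcases Nat.eq_zero_or_pos M with rfl | hM
  · simp
  have hM' : (0 : ℝ) < M := by exact_mod_cast hM
  have hδM : ∀ i ∈ Icc 1 (M ^ 3), ε / (M : ℝ) ^ 2 ≤ δ i := fun i hi => by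
    obtain ⟨hi1, hiM⟩ := mem_Icc.1 hi
    have hi0 : (0 : ℝ) < i := by exact_mod_cast hi1
    have hiM : (i : ℝ) ≤ (M : ℝ) ^ 3 := by exact_mod_cast hiM
    have hpow : (i : ℝ) ^ ((2 : ℝ) / 3) ≤ (M : ℝ) ^ 2 :=
      calc (i : ℝ) ^ ((2 : ℝ) / 3) ≤ ((M : ℝ) ^ 3) ^ ((2 : ℝ) / 3) := by gcongr
        _ = (M : ℝ) ^ 2 := by
          rw [← rpow_natCast, ← rpow_mul hM'.le, ← rpow_natCast]
          norm_num
    rw [hδ]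
    exact div_le_div_of_nonneg_left hε (by positivity) hpow
  have hstep : 0 ≤ ε / (M : ℝ) ^ 2 := by positivity
  calc 1 + ε * M = 1 + ((M ^ 3 : ℕ) : ℝ) * (ε / (M : ℝ) ^ 2) := by
        push_cast
        field_simp
    _ ≤ (1 + ε / (M : ℝ) ^ 2) ^ (M ^ 3) := one_add_mul_le_pow (by linarith) _
    _ = ∏ _i ∈ Icc 1 (M ^ 3), (1 + ε / (M : ℝ) ^ 2) := by simp
    _ ≤ ∏ i ∈ Icc 1 (M ^ 3), (1 + δ i) :=
        prod_le_prod (fun _ _ => by positivity) fun i hi => by linarith [hδM i hi]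

lemma sq_one_sub_mul_prod_le (hδ : ∀ i : ℕ, δ i = ε / (i : ℝ) ^ ((2 : ℝ) / 3)) (hε0 : 0 < ε)
    (hε : ε ≤ 1 / 8) (m : ℕ) :
    (1 - ε) ^ 2 * ((1 + δ (m + 1)) * ∏ i ∈ Icc 1 m, (1 + δ i)) ≤
      (∏ i ∈ Icc 1 m, (1 + δ i / 2 - 2 * δ i ^ 2)) ^ 2 := by
  have hδ0 : ∀ i ∈ Icc 1 m, 0 < δ i := fun i hi => delta_pos hδ hε0 (mem_Icc.1 hi).1
  have hδ8 : ∀ i ∈ Icc 1 m, δ i ≤ 1 / 8 := fun i hi =>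
    (delta_le hδ hε0.le (mem_Icc.1 hi).1).trans hε
  have hd : 0 < δ (m + 1) := delta_pos hδ hε0 (by omega)
  set P := ∏ i ∈ Icc 1 m, (1 + δ i)
  set Q := ∏ i ∈ Icc 1 m, (1 - 2 * δ i ^ 2)
  have hP : 0 ≤ P := prod_nonneg fun i hi => by linarith [hδ0 i hi]
  have hPQ : P * Q ^ 2 ≤ (∏ i ∈ Icc 1 m, (1 + δ i / 2 - 2 * δ i ^ 2)) ^ 2 := by
    rw [← prod_pow, ← prod_pow, ← prod_mul_distrib]
    refine prod_le_prod (fun i hi => ?_) fun i hi => ?_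
    · have := hδ0 i hi
      positivity
    · exact one_add_mul_one_sub_sq_le (hδ0 i hi).le (by linarith [hδ8 i hi])
  have hQ : 1 - ∑ i ∈ Icc 1 m, 2 * δ i ^ 2 ≤ Q := by
    refine one_sub_sum_le_prod_one_sub (fun i _ => by positivity) fun i hi => ?_
    nlinarith [hδ0 i hi, hδ8 i hi]
  have hscalar := one_sub_mul_one_add_delta_le hδ hε0.le hε m
  have h0 : 0 ≤ (1 - ε) * (1 + δ (m + 1) / 2) := mul_nonneg (by linarith) (by linarith)
  calc (1 - ε) ^ 2 * ((1 + δ (m + 1)) * P) ≤ ((1 - ε) * (1 + δ (m + 1) / 2)) ^ 2 * P := by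
        rw [← mul_assoc]
        exact mul_le_mul_of_nonneg_right (by nlinarith [sq_nonneg ((1 - ε) * δ (m + 1))]) hP
    _ ≤ Q ^ 2 * P := mul_le_mul_of_nonneg_right (pow_le_pow_left₀ h0 (hscalar.trans hQ) 2) hP
    _ ≤ _ := by linarith

lemma exists_lt_prod_one_add_delta (hδ : ∀ i : ℕ, δ i = ε / (i : ℝ) ^ ((2 : ℝ) / 3))
    (hε : 0 < ε) (x : ℝ) : ∃ m, x < ∏ i ∈ Icc 1 m, (1 + δ i) := by
  obtain ⟨M, hM⟩ := exists_nat_gt (x / ε)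
  rw [div_lt_iff₀ hε] at hM
  exact ⟨M ^ 3, by nlinarith [one_add_mul_le_prod_one_add_delta hδ hε.le M]⟩

lemma one_sub_mul_sqrt_le_prod (hδ : ∀ i : ℕ, δ i = ε / (i : ℝ) ^ ((2 : ℝ) / 3))
    (hε0 : 0 < ε) (hε : ε ≤ 1 / 8) {m : ℕ} {x : ℝ}
    (hx : x ≤ (1 + δ (m + 1)) * ∏ i ∈ Icc 1 m, (1 + δ i)) :
    (1 - ε) * √x ≤ ∏ i ∈ Icc 1 m, (1 + δ i / 2 - 2 * δ i ^ 2) := by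
  have hc0 : 0 ≤ ∏ i ∈ Icc 1 m, (1 + δ i / 2 - 2 * δ i ^ 2) :=
    prod_nonneg fun i hi => (one_add_delta_div_two_sub_pos hδ hε0 hε (mem_Icc.1 hi).1).le
  calc (1 - ε) * √x = √((1 - ε) ^ 2 * x) := by
        rw [sqrt_mul (sq_nonneg _), sqrt_sq (by linarith)]
    _ ≤ √((∏ i ∈ Icc 1 m, (1 + δ i / 2 - 2 * δ i ^ 2)) ^ 2) := by
        gcongr
        exact (mul_le_mul_of_nonneg_left hx (sq_nonneg _)).trans (sq_one_sub_mul_prod_le hδ hε0 hε m)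
    _ = ∏ i ∈ Icc 1 m, (1 + δ i / 2 - 2 * δ i ^ 2) := sqrt_sq hc0

end

theorem monotone_increasing_function_lower
    (ε t : ℝ) (hε0 : 0 < ε) (hε : ε ≤ 1 / 8) (ht : 0 < t)
    (f : ℝ → ℝ) (hmono : Monotone f) (hnonneg : ∀ x, 0 ≤ f x)
    (δ h c : ℕ → ℝ)
    (hδ : ∀ i : ℕ, δ i = ε / (i : ℝ) ^ ((2 : ℝ) / 3))
    (hh : ∀ k : ℕ, h k = ∏ i ∈ Finset.Icc 1 (k - 1), (1 + δ i))
    (hc : ∀ k : ℕ, c k = ∏ i ∈ Finset.Icc 1 (k - 1), (1 + δ i / 2 - 2 * δ i ^ 2))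
    (hex : ∃ n : ℕ, t < n ∧ f n < (1 - ε) * Real.sqrt ((n : ℝ) / t) * f t) :
    ∃ k : ℕ, 1 ≤ k ∧
      f ((1 + δ k) * h k * t) < (1 + δ k / 2 - 2 * δ k ^ 2) * f (h k * t) ∧
      c k * f t ≤ f (h k * t) := by
  have hh' (m : ℕ) : h (m + 1) = ∏ i ∈ Icc 1 m, (1 + δ i) := by simpa using hh (m + 1)
  have hc' (m : ℕ) : c (m + 1) = ∏ i ∈ Icc 1 m, (1 + δ i / 2 - 2 * δ i ^ 2) := by
    simpa using hc (m + 1)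
  have hh_succ (m : ℕ) : h (m + 2) = (1 + δ (m + 1)) * h (m + 1) := by
    rw [hh', hh', prod_Icc_succ_top (by omega), mul_comm]
  obtain ⟨n, htn, hfn⟩ := hex
  have hunbounded : ∃ m, (n : ℝ) < h (m + 1) * t := by
    obtain ⟨m, hm⟩ := exists_lt_prod_one_add_delta hδ hε0 ((n : ℝ) / t)
    exact ⟨m, by rw [hh', ← div_lt_iff₀ ht]; exact hm⟩
  obtain ⟨m, hmn, hnm⟩ := exists_le_lt_succ (g := fun m => h (m + 1) * t)
    (by simp [hh', htn.le]) hunbounded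
  have hnt : (n : ℝ) / t ≤ (1 + δ (m + 1)) * ∏ i ∈ Icc 1 m, (1 + δ i) := by
    rw [div_le_iff₀ ht, ← hh', ← hh_succ]
    exact hnm.le
  have hfail : f (h (m + 1) * t) < c (m + 1) * f t :=
    calc f (h (m + 1) * t) ≤ f n := hmono hmn
      _ < (1 - ε) * √((n : ℝ) / t) * f t := hfn
      _ ≤ c (m + 1) * f t := by
          rw [hc']
          exact mul_le_mul_of_nonneg_right (one_sub_mul_sqrt_le_prod hδ hε0 hε hnt) (hnonneg t)
  obtain ⟨k, hstep, hlower⟩ := exists_lt_mul_and_prod_mul_le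
    (F := fun m => f (h (m + 1) * t)) (b := fun i => 1 + δ i / 2 - 2 * δ i ^ 2)
    (fun m => (one_add_delta_div_two_sub_pos hδ hε0 hε (Nat.le_add_left 1 m)).le)
    ⟨m, by simpa [hh', hc'] using hfail⟩
  refine ⟨k + 1, by omega, ?_, ?_⟩
  · simpa [hh_succ, mul_assoc] using hstep
  · simpa [hh', hc'] using hlower
end

section
/- Let 0 < ε ≤ 1/40, let t > 0 be real, and let f : ℝ → ℝ be a monotone increasing nonnegative function. For every integer k ≥ 1 define δₖ = ε/k^{2/3}, hₖ = ∏_{i=1}^{k−1}(1 + δᵢ), and cₖ = ∏_{i=1}^{k−1}(1 + δᵢ/2 + 2δᵢ²). If there exists a natural number n with t < n and f(n) > (1+ε)·√(n/t)·f(t), then there exists an integer k ≥ 1 such that f((1+δₖ)·hₖ·t) > (1 + δₖ/2 + 2δₖ²)·f(hₖ·t) and f(hₖ·t) ≤ cₖ·f(t). -/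
open Finset Real Filter

/-!
Since `∑ δᵢ` diverges, some `hₖ` exceeds `n / t`; let `K` be the first such index. From
`(1 + δ/2 + 2δ²)² ≤ (1 + δ)(1 + 5δ²)` and `∑ δᵢ² ≤ 4ε²` (a `p`-series with `p = 4/3`) we get
`c_K² ≤ e^{20ε²} (1 + ε/2 + 2ε²)² h_{K-1} ≤ (1 + ε)² n / t`, hence `c_K f(t) < f(n) ≤ f(h_K t)`.
As `f(h₁ t) = c₁ f(t)`, the inequality `f(hₖ t) ≤ cₖ f(t)` fails for a first time at some
`k + 1 ≤ K`; since `c_{k+1} = cₖ (1 + δₖ/2 + 2δₖ²)` and `h_{k+1} = (1 + δₖ) hₖ`, this `k` is the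
required index.
-/

theorem exists_lt_and_le_of_exists_lt {x y r : ℕ → ℝ} (hr : ∀ k, 0 ≤ r k)
    (hy : ∀ k, y (k + 1) = r k * y k) (h0 : x 0 ≤ y 0) (hcross : ∃ k, y k < x k) :
    ∃ k, r k * x k < x (k + 1) ∧ x k ≤ y k := by
  obtain ⟨k, hle, hlt⟩ := Nat.exists_not_and_succ_of_not_zero_of_exists h0.not_gt hcross
  rw [not_lt] at hle
  refine ⟨k, ?_, hle⟩
  calc r k * x k ≤ r k * y k := mul_le_mul_of_nonneg_left hle (hr k)
    _ = y (k + 1) := (hy k).symm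
    _ < x (k + 1) := hlt

theorem sq_one_add_half_add_two_sq_le {d : ℝ} (h0 : 0 ≤ d) (h1 : d ≤ 1 / 2) :
    (1 + d / 2 + 2 * d ^ 2) ^ 2 ≤ (1 + d) * (1 + 5 * d ^ 2) := by
  nlinarith [mul_nonneg (mul_nonneg h0 h0) (mul_nonneg h0 (sub_nonneg.2 h1)), sq_nonneg d]

theorem exp_mul_sq_one_add_half_add_two_sq_le {ε : ℝ} (h0 : 0 ≤ ε) (h1 : ε ≤ 1 / 40) :
    exp (20 * ε ^ 2) * (1 + ε / 2 + 2 * ε ^ 2) ^ 2 ≤ (1 + ε) ^ 2 := by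
  have hsmall : 20 * ε ^ 2 < 1 := by nlinarith
  have hexp := exp_bound_div_one_sub_of_interval (by positivity) hsmall
  rw [le_div_iff₀ (by linarith)] at hexp
  nlinarith [exp_pos (20 * ε ^ 2), mul_nonneg h0 h0, mul_nonneg (mul_nonneg h0 h0) h0]

theorem one_add_sum_le_prod_one_add {ι : Type*} (s : Finset ι) {a : ι → ℝ}
    (ha : ∀ i, 0 ≤ a i) : 1 + ∑ i ∈ s, a i ≤ ∏ i ∈ s, (1 + a i) := by
  classical
  induction s using Finset.induction_on with
  | empty => simp
  | insert j s hj ih =>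
    rw [sum_insert hj, prod_insert hj]
    nlinarith [ha j, sum_nonneg fun i (_ : i ∈ s) => ha i]

theorem sq_prod_le_prod_mul_exp {ι : Type*} (s : Finset ι) {a : ι → ℝ} (ha0 : ∀ i, 0 ≤ a i)
    (ha1 : ∀ i, a i ≤ 1 / 2) :
    (∏ i ∈ s, (1 + a i / 2 + 2 * a i ^ 2)) ^ 2 ≤
      (∏ i ∈ s, (1 + a i)) * exp (5 * ∑ i ∈ s, a i ^ 2) := by
  calc (∏ i ∈ s, (1 + a i / 2 + 2 * a i ^ 2)) ^ 2
      = ∏ i ∈ s, (1 + a i / 2 + 2 * a i ^ 2) ^ 2 := (prod_pow _ _ _).symm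
    _ ≤ ∏ i ∈ s, ((1 + a i) * (1 + 5 * a i ^ 2)) :=
        prod_le_prod (fun i _ => sq_nonneg _)
          fun i _ => sq_one_add_half_add_two_sq_le (ha0 i) (ha1 i)
    _ = (∏ i ∈ s, (1 + a i)) * ∏ i ∈ s, (1 + 5 * a i ^ 2) := prod_mul_distrib
    _ ≤ (∏ i ∈ s, (1 + a i)) * exp (5 * ∑ i ∈ s, a i ^ 2) := by
        rw [mul_sum]
        gcongr
        · exact prod_nonneg fun i _ => by linarith [ha0 i]
        · exact prod_one_add_le_exp_sum s fun i => by positivity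

section ProductBounds

variable {a : ℕ → ℝ} {ε : ℝ}

theorem sq_prod_range_succ_le (ha0 : ∀ i, 0 ≤ a i) (haε : ∀ i, a i ≤ ε) (hε : ε ≤ 1 / 40)
    (hsq : ∀ k, ∑ i ∈ range k, a i ^ 2 ≤ 4 * ε ^ 2) (k : ℕ) :
    (∏ i ∈ range (k + 1), (1 + a i / 2 + 2 * a i ^ 2)) ^ 2 ≤
      (1 + ε) ^ 2 * ∏ i ∈ range k, (1 + a i) := by
  have hε0 : 0 ≤ ε := (ha0 0).trans (haε 0)
  have hH : 0 ≤ ∏ i ∈ range k, (1 + a i) := prod_nonneg fun i _ => by linarith [ha0 i]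
  have hlast : (1 + a k / 2 + 2 * a k ^ 2) ^ 2 ≤ (1 + ε / 2 + 2 * ε ^ 2) ^ 2 := by
    have := ha0 k
    have := haε k
    gcongr
  rw [prod_range_succ, mul_pow]
  calc _ ≤ ((∏ i ∈ range k, (1 + a i)) * exp (20 * ε ^ 2)) * (1 + ε / 2 + 2 * ε ^ 2) ^ 2 := by
        gcongr
        exact (sq_prod_le_prod_mul_exp _ ha0 fun i => by linarith [haε i]).trans
          (mul_le_mul_of_nonneg_left (exp_le_exp.2 (by linarith [hsq k])) hH)
    _ = (∏ i ∈ range k, (1 + a i)) * (exp (20 * ε ^ 2) * (1 + ε / 2 + 2 * ε ^ 2) ^ 2) := by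
        ring
    _ ≤ (∏ i ∈ range k, (1 + a i)) * (1 + ε) ^ 2 := by
        gcongr
        exact exp_mul_sq_one_add_half_add_two_sq_le hε0 hε
    _ = _ := mul_comm _ _

theorem tendsto_prod_range_one_add_atTop (ha0 : ∀ i, 0 ≤ a i)
    (hdiv : Tendsto (fun k => ∑ i ∈ range k, a i) atTop atTop) :
    Tendsto (fun k => ∏ i ∈ range k, (1 + a i)) atTop atTop :=
  tendsto_atTop_mono
    (fun _ => (le_add_of_nonneg_left zero_le_one).trans (one_add_sum_le_prod_one_add _ ha0)) hdiv

theorem exists_lt_prod_and_prod_le_sqrt (ha0 : ∀ i, 0 ≤ a i) (haε : ∀ i, a i ≤ ε)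
    (hε : ε ≤ 1 / 40) (hsq : ∀ k, ∑ i ∈ range k, a i ^ 2 ≤ 4 * ε ^ 2)
    (hdiv : Tendsto (fun k => ∑ i ∈ range k, a i) atTop atTop) {B : ℝ} (hB : 1 ≤ B) :
    ∃ k, B < ∏ i ∈ range k, (1 + a i) ∧
      ∏ i ∈ range k, (1 + a i / 2 + 2 * a i ^ 2) ≤ (1 + ε) * √B := by
  have hε0 : 0 ≤ ε := (ha0 0).trans (haε 0)
  obtain ⟨k, hle, hlt⟩ := Nat.exists_not_and_succ_of_not_zero_of_exists (by simpa using hB)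
    ((tendsto_prod_range_one_add_atTop ha0 hdiv).eventually_gt_atTop B).exists
  refine ⟨k + 1, hlt, ?_⟩
  rw [← sqrt_sq (by linarith : 0 ≤ 1 + ε), ← sqrt_mul (by positivity)]
  refine le_sqrt_of_sq_le ((sq_prod_range_succ_le ha0 haε hε hsq k).trans ?_)
  gcongr
  exact not_lt.1 hle

end ProductBounds

theorem prod_Icc_one_eq_prod_range {M : Type*} [CommMonoid M] (g : ℕ → M) (k : ℕ) :
    ∏ i ∈ Icc 1 k, g i = ∏ i ∈ range k, g (i + 1) := by
  rw [← Ico_add_one_right_eq_Icc, prod_Ico_eq_prod_range, Nat.add_sub_cancel]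
  simp only [add_comm]

theorem sum_range_inv_rpow_le {p : ℝ} (hp : 1 < p) (k : ℕ) :
    ∑ i ∈ range k, (((i : ℝ) + 1) ^ p)⁻¹ ≤ p / (p - 1) := by
  have htail (m : ℕ) : ∑ i ∈ range m, ((((i + 1 : ℕ) : ℝ) + 1) ^ p)⁻¹ ≤ 1 / (p - 1) := by
    have hanti : AntitoneOn (fun x : ℝ => x ^ (-p)) (Set.Icc 1 (1 + m)) := fun x hx y _ hxy =>
      rpow_le_rpow_of_nonpos (by linarith [hx.1]) hxy (by linarith)
    have hint : ∫ x in (1 : ℝ)..1 + m, x ^ (-p) = (1 - (1 + m) ^ (1 - p)) / (p - 1) := by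
      rw [integral_rpow (Or.inr ⟨by linarith, by simp [Set.uIcc_of_le]⟩), one_rpow,
        neg_add_eq_sub, div_eq_div_iff (by linarith) (by linarith)]
      ring
    calc _ = ∑ i ∈ range m, (1 + ((i + 1 : ℕ) : ℝ)) ^ (-p) :=
          sum_congr rfl fun i _ => by rw [rpow_neg (by positivity), add_comm]
      _ ≤ ∫ x in (1 : ℝ)..1 + m, x ^ (-p) := hanti.sum_le_integral
      _ ≤ 1 / (p - 1) := by
          rw [hint]; gcongr; linarith [rpow_nonneg (by positivity : (0:ℝ) ≤ 1 + m) (1 - p)]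
  cases k with
  | zero => simp only [range_zero, sum_empty]; exact (div_pos (by linarith) (by linarith)).le
  | succ m =>
    rw [sum_range_succ']
    calc _ ≤ 1 / (p - 1) + 1 := by simpa using htail m
      _ = p / (p - 1) := by field_simp [(by linarith : p - 1 ≠ 0)]; ring

theorem sum_range_sq_div_rpow_le (ε : ℝ) (k : ℕ) :
    ∑ i ∈ range k, (ε / ((i + 1 : ℕ) : ℝ) ^ ((2 : ℝ) / 3)) ^ 2 ≤ 4 * ε ^ 2 := by
  have hterm (i : ℕ) : (ε / ((i + 1 : ℕ) : ℝ) ^ ((2 : ℝ) / 3)) ^ 2 =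
      ε ^ 2 * (((i : ℝ) + 1) ^ ((4 : ℝ) / 3))⁻¹ := by
    rw [div_pow, ← rpow_mul_natCast (by positivity)]
    push_cast
    norm_num [div_eq_mul_inv]
  simp only [hterm, ← mul_sum]
  have := sum_range_inv_rpow_le (by norm_num : (1 : ℝ) < 4 / 3) k
  norm_num at this
  nlinarith [sq_nonneg ε]

theorem tendsto_sum_range_div_rpow_atTop {ε : ℝ} (hε : 0 < ε) :
    Tendsto (fun k => ∑ i ∈ range k, ε / ((i + 1 : ℕ) : ℝ) ^ ((2 : ℝ) / 3)) atTop atTop := by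
  refine (not_summable_iff_tendsto_nat_atTop_of_nonneg fun i => by positivity).1 fun hsum => ?_
  simp only [div_eq_mul_inv, summable_mul_left_iff hε.ne'] at hsum
  have := summable_nat_rpow_inv.1 ((summable_nat_add_iff 1).1 hsum)
  norm_num at this

theorem monotone_increasing_function_upper
    (ε t : ℝ) (hε0 : 0 < ε) (hε : ε ≤ 1 / 40) (ht : 0 < t)
    (f : ℝ → ℝ) (hmono : Monotone f) (hnonneg : ∀ x, 0 ≤ f x)
    (δ h c : ℕ → ℝ)
    (hδ : ∀ i : ℕ, δ i = ε / (i : ℝ) ^ ((2 : ℝ) / 3))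
    (hh : ∀ k : ℕ, h k = ∏ i ∈ Finset.Icc 1 (k - 1), (1 + δ i))
    (hc : ∀ k : ℕ, c k = ∏ i ∈ Finset.Icc 1 (k - 1), (1 + δ i / 2 + 2 * δ i ^ 2))
    (hex : ∃ n : ℕ, t < n ∧ (1 + ε) * Real.sqrt ((n : ℝ) / t) * f t < f n) :
    ∃ k : ℕ, 1 ≤ k ∧
      (1 + δ k / 2 + 2 * δ k ^ 2) * f (h k * t) < f ((1 + δ k) * h k * t) ∧
      f (h k * t) ≤ c k * f t := by
  obtain ⟨n, hn, hfn⟩ := hex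
  have hδ0 (i : ℕ) : 0 ≤ δ (i + 1) := by rw [hδ]; positivity
  have hδε (i : ℕ) : δ (i + 1) ≤ ε := by
    rw [hδ]; exact div_le_self hε0.le (one_le_rpow (by simp) (by norm_num))
  have hH (k : ℕ) : h (k + 1) = ∏ i ∈ range k, (1 + δ (i + 1)) := by
    rw [hh, Nat.add_sub_cancel, prod_Icc_one_eq_prod_range]
  have hC (k : ℕ) : c (k + 1) = ∏ i ∈ range k, (1 + δ (i + 1) / 2 + 2 * δ (i + 1) ^ 2) := by
    rw [hc, Nat.add_sub_cancel, prod_Icc_one_eq_prod_range]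
  obtain ⟨K, hK, hCK⟩ := exists_lt_prod_and_prod_le_sqrt hδ0 hδε hε
    (by simpa only [hδ] using sum_range_sq_div_rpow_le ε)
    (by simpa only [hδ] using tendsto_sum_range_div_rpow_atTop hε0)
    ((one_le_div ht).2 hn.le)
  rw [← hH, div_lt_iff₀ ht] at hK
  have hcross : c (K + 1) * f t < f (h (K + 1) * t) := calc
    c (K + 1) * f t ≤ (1 + ε) * √(n / t) * f t := by
      rw [hC]; exact mul_le_mul_of_nonneg_right hCK (hnonneg t)
    _ < f n := hfn
    _ ≤ f (h (K + 1) * t) := hmono hK.le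
  obtain ⟨k, hgrow, hle⟩ := exists_lt_and_le_of_exists_lt
    (x := fun k => f (h (k + 1) * t)) (y := fun k => c (k + 1) * f t)
    (r := fun k => 1 + δ (k + 1) / 2 + 2 * δ (k + 1) ^ 2)
    (fun k => by nlinarith [hδ0 k]) (fun k => by simp only [hC, prod_range_succ]; ring)
    (by simp [hH, hC]) ⟨K, hcross⟩
  have hstep : h (k + 1 + 1) = (1 + δ (k + 1)) * h (k + 1) := by
    rw [hH, hH, prod_range_succ, mul_comm]
  exact ⟨k + 1, by omega, by simpa only [hstep] using hgrow, hle⟩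
end

section
/- Let (Aₙ) be a ([1,1,0,2], 1, 0) Pólya urn process (Aₙ has the distribution of the degree of the first vertex of the preferential attachment graph G₁ⁿ with parameter m = 1). Then for every real ε > 0 there exists N ∈ ℕ such that for all natural numbers n > N: ℙ[Aₙ ≤ ε·√n] ≥ 1/n. -/
open MeasureTheory ProbabilityTheory Real Finset

/-- A `([1,1,0,2], a₀, b₀)` Pólya urn process: `A n` counts the balls of color `A`
after `n` steps in the balanced two-color urn with replacement matrix `[[1,1],[0,2]]`,
started from `a₀` balls of color `A` and `b₀` balls of color `B`.  The increments are
in `{0,1}` a.s. and the conditional probability of an increment, given `A 0, …, A n`,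
is `A n / (a₀ + b₀ + 2 n)`. -/
structure PolyaUrn112 {Ω : Type*} [m0 : MeasurableSpace Ω] (μ : Measure Ω)
    (a₀ b₀ : ℕ) where
  A : ℕ → Ω → ℕ
  meas : ∀ n : ℕ, Measurable (A n)
  init : ∀ ω, A 0 ω = a₀
  incr : ∀ n : ℕ, ∀ᵐ ω ∂μ, A (n + 1) ω = A n ω ∨ A (n + 1) ω = A n ω + 1
  cond : ∀ n : ℕ,
      μ[Set.indicator {ω' | A (n + 1) ω' = A n ω' + 1} (fun _ => (1 : ℝ))
        | ⨆ i ∈ Finset.range (n + 1), MeasurableSpace.comap (A i) inferInstance]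
        =ᵐ[μ] fun ω => (A n ω : ℝ) / (a₀ + b₀ + 2 * n)

/-- The ordinary binomial coefficient of two integers, equal to `0` when the lower
index exceeds the upper index or when an index is negative. -/
def intChoose (a b : ℤ) : ℕ :=
  if 0 ≤ b ∧ b ≤ a then a.toNat.choose b.toNat else 0


/-!
Conditioning on the history, the transition rule turns into a linear recursion for the point
masses `ℙ[Aₙ = b]`. In the first-vertex urn the first draw is `A` surely, and the recursion gives
`ℙ[Aₙ₊₁ = 2] = 1/(2n+1)` and then `ℙ[Aₙ₊₂ = 3] = 2/(2n+3) ≥ 1/(n+2)`. Once `ε√n ≥ 3`, the event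
`{Aₙ = 3}` lies inside `{Aₙ ≤ ε√n}`.
-/

namespace PolyaUrn112

variable {Ω : Type*} [MeasurableSpace Ω] {μ : Measure Ω} {a₀ b₀ : ℕ} (U : PolyaUrn112 μ a₀ b₀)

def drawA (n : ℕ) : Set Ω := {ω | U.A (n + 1) ω = U.A n ω + 1}

lemma measurableSet_drawA (n : ℕ) : MeasurableSet (U.drawA n) :=
  measurableSet_eq_fun (U.meas (n + 1)) ((U.meas n).add_const 1)

abbrev history (n : ℕ) : MeasurableSpace Ω :=
  ⨆ i ∈ Finset.range (n + 1), MeasurableSpace.comap (U.A i) inferInstance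

lemma history_le (n : ℕ) : U.history n ≤ ‹_› :=
  iSup₂_le fun i _ => (U.meas i).comap_le

lemma measurableSet_history_preimage (n : ℕ) (s : Set ℕ) :
    MeasurableSet[U.history n] (U.A n ⁻¹' s) :=
  le_iSup₂ (f := fun i (_ : i ∈ Finset.range (n + 1)) =>
    MeasurableSpace.comap (U.A i) inferInstance) n (Finset.self_mem_range_succ n) _
    ⟨s, trivial, rfl⟩

lemma measureReal_A_zero_self [IsProbabilityMeasure μ] : μ.real (U.A 0 ⁻¹' {a₀}) = 1 := by
  rw [Set.eq_univ_of_forall (s := U.A 0 ⁻¹' {a₀}) U.init, probReal_univ]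

lemma measureReal_A_zero_of_ne {a : ℕ} (ha : a ≠ a₀) : μ.real (U.A 0 ⁻¹' {a}) = 0 := by
  rw [Set.eq_empty_of_forall_notMem (s := U.A 0 ⁻¹' {a})
    fun ω (h : U.A 0 ω = a) => ha (h ▸ U.init ω), measureReal_empty]

lemma preimage_succ_ae_eq (n b : ℕ) :
    (U.A (n + 1) ⁻¹' {b + 1} : Set Ω)
      =ᵐ[μ] ((U.A n ⁻¹' {b} ∩ U.drawA n) ∪ (U.A n ⁻¹' {b + 1} \ U.drawA n) : Set Ω) := by
  rw [Filter.eventuallyEq_set]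
  filter_upwards [U.incr n] with ω hω
  simp only [drawA, Set.mem_union, Set.mem_inter_iff, Set.mem_sdiff, Set.mem_preimage,
    Set.mem_singleton_iff, Set.mem_ofPred_eq]
  omega

section Finite

variable [IsFiniteMeasure μ]

lemma measureReal_inter_drawA (n a : ℕ) :
    μ.real (U.A n ⁻¹' {a} ∩ U.drawA n) = a / (a₀ + b₀ + 2 * n) * μ.real (U.A n ⁻¹' {a}) := by
  have hS : MeasurableSet (U.A n ⁻¹' {a}) := U.meas n (measurableSet_singleton a)
  calc μ.real (U.A n ⁻¹' {a} ∩ U.drawA n)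
      = ∫ ω in U.A n ⁻¹' {a}, (U.drawA n).indicator (fun _ => (1 : ℝ)) ω ∂μ := by
        rw [setIntegral_indicator (U.measurableSet_drawA n), setIntegral_const, smul_eq_mul,
          mul_one]
    _ = ∫ ω in U.A n ⁻¹' {a}, (U.A n ω : ℝ) / (a₀ + b₀ + 2 * n) ∂μ := by
        rw [← setIntegral_condExp (U.history_le n)
          ((integrable_const 1).indicator (U.measurableSet_drawA n))
          (U.measurableSet_history_preimage n {a})]
        exact setIntegral_congr_ae hS (by filter_upwards [U.cond n] with ω h _ using h)
    _ = ∫ _ in U.A n ⁻¹' {a}, (a : ℝ) / (a₀ + b₀ + 2 * n) ∂μ :=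
        setIntegral_congr_fun hS fun ω (hω : U.A n ω = a) => by rw [hω]
    _ = a / (a₀ + b₀ + 2 * n) * μ.real (U.A n ⁻¹' {a}) := by
        rw [setIntegral_const, smul_eq_mul, mul_comm]

theorem measureReal_preimage_succ (n b : ℕ) :
    μ.real (U.A (n + 1) ⁻¹' {b + 1})
      = b / (a₀ + b₀ + 2 * n) * μ.real (U.A n ⁻¹' {b})
        + (1 - (b + 1) / (a₀ + b₀ + 2 * n)) * μ.real (U.A n ⁻¹' {b + 1}) := by
  have hdisj : Disjoint (U.A n ⁻¹' {b} ∩ U.drawA n) (U.A n ⁻¹' {b + 1} \ U.drawA n) :=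
    Set.disjoint_left.2 fun ω h₁ h₂ => by
      simp only [Set.mem_inter_iff, Set.mem_sdiff, Set.mem_preimage,
        Set.mem_singleton_iff] at h₁ h₂
      omega
  have hdiff := measureReal_inter_add_sdiff₀ (μ := μ) (s := U.A n ⁻¹' {b + 1})
    (U.measurableSet_drawA n).nullMeasurableSet
  rw [measureReal_congr (U.preimage_succ_ae_eq n b),
    measureReal_union hdisj (((U.meas n) (measurableSet_singleton _)).diff
      (U.measurableSet_drawA n)), U.measureReal_inter_drawA]
  rw [U.measureReal_inter_drawA] at hdiff
  push_cast at hdiff ⊢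
  linear_combination hdiff

end Finite

section FirstVertex

variable (U : PolyaUrn112 μ 1 0)

lemma measureReal_preimage_succ_of_first_vertex [IsFiniteMeasure μ] (n b : ℕ) :
    μ.real (U.A (n + 1) ⁻¹' {b + 1})
      = b / (2 * n + 1) * μ.real (U.A n ⁻¹' {b})
        + (1 - (b + 1) / (2 * n + 1)) * μ.real (U.A n ⁻¹' {b + 1}) := by
  simpa [add_comm] using U.measureReal_preimage_succ n b

lemma measureReal_A_succ_eq_one [IsFiniteMeasure μ] (n : ℕ) :
    μ.real (U.A (n + 1) ⁻¹' {1}) = 0 := by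
  induction n with
  | zero => simpa using U.measureReal_preimage_succ_of_first_vertex 0 0
  | succ n ih => simpa [ih] using U.measureReal_preimage_succ_of_first_vertex (n + 1) 0

lemma measureReal_A_succ_eq_two [IsProbabilityMeasure μ] (n : ℕ) :
    μ.real (U.A (n + 1) ⁻¹' {2}) = 1 / (2 * n + 1) := by
  induction n with
  | zero =>
    simpa [U.measureReal_A_zero_self, U.measureReal_A_zero_of_ne (show 2 ≠ 1 by decide)]
      using U.measureReal_preimage_succ_of_first_vertex 0 1
  | succ n ih =>
    rw [U.measureReal_preimage_succ_of_first_vertex, U.measureReal_A_succ_eq_one, ih]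
    push_cast
    field_simp
    ring

lemma measureReal_A_add_two_eq_three [IsProbabilityMeasure μ] (n : ℕ) :
    μ.real (U.A (n + 2) ⁻¹' {3}) = 2 / (2 * n + 3) := by
  induction n with
  | zero =>
    have := U.measureReal_preimage_succ_of_first_vertex 1 2
    norm_num [U.measureReal_A_succ_eq_two 0] at this
    norm_num [this]
  | succ n ih =>
    rw [U.measureReal_preimage_succ_of_first_vertex, ih, U.measureReal_A_succ_eq_two]
    push_cast
    field_simp
    ring

end FirstVertex

end PolyaUrn112

theorem polya_urn_first_vertex_small_degree
    {Ω : Type*} [m0 : MeasurableSpace Ω] (μ : Measure Ω) [IsProbabilityMeasure μ]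
    (U : PolyaUrn112 μ 1 0) (ε : ℝ) (hε : 0 < ε) :
    ∃ N : ℕ, ∀ n : ℕ, N < n →
      1 / (n : ℝ) ≤ (μ {ω | (U.A n ω : ℝ) ≤ ε * Real.sqrt n}).toReal := by
  refine ⟨⌈(3 / ε) ^ 2⌉₊ + 1, fun n hn => ?_⟩
  obtain ⟨m, rfl⟩ : ∃ m, n = m + 2 := ⟨n - 2, by omega⟩
  have h3 : (3 : ℝ) ≤ ε * √(m + 2 : ℕ) := by
    have hsq : (3 / ε) ^ 2 ≤ (m + 2 : ℕ) :=
      (Nat.le_ceil _).trans (by exact_mod_cast (by omega : ⌈(3 / ε) ^ 2⌉₊ ≤ m + 2))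
    rw [mul_comm, ← div_le_iff₀ hε]
    exact Real.le_sqrt_of_sq_le hsq
  calc 1 / ((m + 2 : ℕ) : ℝ) ≤ 2 / (2 * m + 3) := by
        rw [div_le_div_iff₀ (by positivity) (by positivity)]
        push_cast
        linarith
    _ = μ.real (U.A (m + 2) ⁻¹' {3}) := (U.measureReal_A_add_two_eq_three m).symm
    _ ≤ μ.real {ω | (U.A (m + 2) ω : ℝ) ≤ ε * √(m + 2 : ℕ)} :=
        measureReal_mono fun ω (hω : U.A (m + 2) ω = 3) => by
          simpa only [Set.mem_ofPred_eq, hω, Nat.cast_ofNat] using h3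
end

section
/- Let a₀ ≥ 1 and b₀ ≥ 0 be integers. Let (Aₙ^{M,a₀,b₀}) and (Aₙ^{M,a₀,0}) be ([1,1,0,2], a₀, b₀) and ([1,1,0,2], a₀, 0) Pólya urn processes respectively, and let (Aₙ^{I,a₀,b₀}) be a ([2,0,0,2], a₀, b₀) Pólya urn process. Then for every natural number n and every integer k ≥ 0: ℙ[Aₙ^{M,a₀,b₀} = a₀ + k] = ∑_{i=0}^{n} ℙ[Aᵢ^{M,a₀,0} = a₀ + k] · ℙ[Aₙ^{I,a₀,b₀} = a₀ + 2i]. -/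
open MeasureTheory ProbabilityTheory Real Finset

/-- A `([2,0,0,2], a₀, b₀)` Pólya urn process: `A n` counts the balls of color `A`
after `n` steps in the classical two-color Pólya urn with replacement matrix
`[[2,0],[0,2]]`, started from `a₀` balls of color `A` and `b₀` balls of color `B`.
The increments are in `{0,2}` a.s. and the conditional probability of an increment,
given `A 0, …, A n`, is `A n / (a₀ + b₀ + 2 n)`. -/
structure PolyaUrn2002 {Ω : Type*} [m0 : MeasurableSpace Ω] (μ : Measure Ω)
    (a₀ b₀ : ℕ) where
  A : ℕ → Ω → ℕ
  meas : ∀ n : ℕ, Measurable (A n)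
  init : ∀ ω, A 0 ω = a₀
  incr : ∀ n : ℕ, ∀ᵐ ω ∂μ, A (n + 1) ω = A n ω ∨ A (n + 1) ω = A n ω + 2
  cond : ∀ n : ℕ,
      μ[Set.indicator {ω' | A (n + 1) ω' = A n ω' + 2} (fun _ => (1 : ℝ))
        | ⨆ i ∈ Finset.range (n + 1), MeasurableSpace.comap (A i) inferInstance]
        =ᵐ[μ] fun ω => (A n ω : ℝ) / (a₀ + b₀ + 2 * n)

/-!
A step of an urn that adds `s` balls of colour `A` with probability `A / t` turns the law `p`
of the number of `A` balls into `p + t⁻¹ • urnDrift s p`; this forward equation follows from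
the conditional increment probability by integrating over the level sets of `A n`.
Let `f i` be the law of the `([1,1,0,2], a₀, 0)` urn after `i` steps and `g n i` the probability
that the `([2,0,0,2], a₀, b₀)` urn holds `a₀ + 2 i` balls of colour `A` after `n` steps.
Since the `([1,1,0,2], a₀, 0)` urn holds `a₀ + 2 i` balls after `i` steps, its forward equation
reads `urnDrift 1 (f i) = (a₀ + 2 i) • (f (i + 1) - f i)`; summing by parts against the forward
equation of `g` shows that `∑ i, g n i • f i` satisfies the forward equation of the
`([1,1,0,2], a₀, b₀)` urn, and it starts from the same point mass at `a₀`.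
-/

def urnDrift (s : ℕ) : (ℕ → ℝ) →ₗ[ℝ] ℕ → ℝ where
  toFun p a := (if s ≤ a then ((a - s : ℕ) : ℝ) * p (a - s) else 0) - a * p a
  map_add' p q := by
    ext a; simp only [Pi.add_apply]; split_ifs <;> ring
  map_smul' c p := by
    ext a; simp only [Pi.smul_apply, smul_eq_mul, RingHom.id_apply]; split_ifs <;> ring

lemma urnDrift_apply_of_lt {s a : ℕ} (p : ℕ → ℝ) (h : a < s) :
    urnDrift s p a = -(a * p a) := by
  simp [urnDrift, not_le.mpr h]

lemma urnDrift_apply_add (s b : ℕ) (p : ℕ → ℝ) :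
    urnDrift s p (b + s) = b * p b - (b + s : ℕ) * p (b + s) := by
  simp [urnDrift]

noncomputable def urnLaw (s a₀ b₀ : ℕ) : ℕ → ℕ → ℝ
  | 0 => Pi.single a₀ 1
  | n + 1 => urnLaw s a₀ b₀ n + (a₀ + b₀ + 2 * n : ℝ)⁻¹ • urnDrift s (urnLaw s a₀ b₀ n)

section urnLaw

variable {s a₀ b₀ : ℕ}

lemma urnLaw_zero : urnLaw s a₀ b₀ 0 = Pi.single a₀ 1 := rfl

lemma urnLaw_succ (n : ℕ) : urnLaw s a₀ b₀ (n + 1) =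
    urnLaw s a₀ b₀ n + (a₀ + b₀ + 2 * n : ℝ)⁻¹ • urnDrift s (urnLaw s a₀ b₀ n) := rfl

lemma urnLaw_eq_zero_of_lt {a : ℕ} (n : ℕ) (ha : a < a₀) : urnLaw s a₀ b₀ n a = 0 := by
  induction n generalizing a with
  | zero => simp [urnLaw_zero, ha.ne]
  | succ n ih =>
    simp only [urnLaw_succ, Pi.add_apply, Pi.smul_apply, urnDrift, LinearMap.coe_mk,
      AddHom.coe_mk, ih ha, ih (lt_of_le_of_lt (Nat.sub_le a s) ha)]
    simp

lemma urnLaw_eq_zero_of_gt {a : ℕ} (n : ℕ) (ha : a₀ + s * n < a) : urnLaw s a₀ b₀ n a = 0 := by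
  induction n generalizing a with
  | zero => simp [urnLaw_zero, (show a ≠ a₀ by omega)]
  | succ n ih =>
    rw [urnLaw_succ, Pi.add_apply, Pi.smul_apply, ih (by nlinarith)]
    rcases lt_or_ge a s with h | h
    · rw [urnDrift_apply_of_lt _ h, ih (by nlinarith)]; simp
    · obtain ⟨b, rfl⟩ := Nat.exists_eq_add_of_le' h
      rw [urnDrift_apply_add, ih (by rw [Nat.mul_succ] at ha; omega), ih (by nlinarith)]; simp

lemma urnDrift_urnLaw (n : ℕ) (h : (a₀ + b₀ + 2 * n : ℝ) ≠ 0) :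
    urnDrift s (urnLaw s a₀ b₀ n) =
      (a₀ + b₀ + 2 * n : ℝ) • (urnLaw s a₀ b₀ (n + 1) - urnLaw s a₀ b₀ n) := by
  rw [urnLaw_succ, add_sub_cancel_left, smul_inv_smul₀ h]

end urnLaw

section OneStep

variable {Ω : Type*} {A : ℕ → Ω → ℕ} {s n : ℕ} {t : ℝ}

abbrev historySigma (A : ℕ → Ω → ℕ) (n : ℕ) : MeasurableSpace Ω :=
  ⨆ i ∈ range (n + 1), MeasurableSpace.comap (A i) inferInstance

lemma measurableSet_historySigma (n b : ℕ) :
    MeasurableSet[historySigma A n] {ω | A n ω = b} :=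
  le_iSup₂ (f := fun i (_ : i ∈ range (n + 1)) => MeasurableSpace.comap (A i) inferInstance) n
    (self_mem_range_succ n) _ ⟨{b}, measurableSet_singleton b, rfl⟩

variable [m0 : MeasurableSpace Ω] {μ : Measure Ω}

lemma historySigma_le (hA : ∀ m, Measurable (A m)) (n : ℕ) : historySigma A n ≤ m0 :=
  iSup₂_le fun i _ => (hA i).comap_le

lemma measureReal_level_inter_jump [IsFiniteMeasure μ] (hA : ∀ m, Measurable (A m))
    (hcond : μ[Set.indicator {ω' | A (n + 1) ω' = A n ω' + s} (fun _ => (1 : ℝ))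
        | historySigma A n] =ᵐ[μ] fun ω => (A n ω : ℝ) / t) (b : ℕ) :
    μ.real ({ω | A n ω = b} ∩ {ω | A (n + 1) ω = A n ω + s}) = b / t * μ.real {ω | A n ω = b} := by
  have hJ : MeasurableSet {ω | A (n + 1) ω = A n ω + s} :=
    measurableSet_eq_fun (hA (n + 1)) ((hA n).add_const s)
  have hlevel := measurableSet_historySigma (A := A) n b
  have hF := historySigma_le hA n
  calc μ.real ({ω | A n ω = b} ∩ {ω | A (n + 1) ω = A n ω + s})
      = ∫ ω in {ω | A n ω = b},
          {ω' | A (n + 1) ω' = A n ω' + s}.indicator (fun _ => (1 : ℝ)) ω ∂μ := by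
        rw [integral_indicator hJ, setIntegral_const, smul_eq_mul, mul_one,
          measureReal_restrict_apply hJ, Set.inter_comm]
    _ = ∫ ω in {ω | A n ω = b},
          (μ[{ω' | A (n + 1) ω' = A n ω' + s}.indicator (fun _ => (1 : ℝ))
            | historySigma A n]) ω ∂μ :=
        (setIntegral_condExp hF ((integrable_const (1 : ℝ)).indicator hJ) hlevel).symm
    _ = ∫ _ in {ω | A n ω = b}, (b / t : ℝ) ∂μ :=
        setIntegral_congr_ae (hF _ hlevel) (hcond.mono fun ω h hω => by
          simp only [h, show A n ω = b from hω])
    _ = b / t * μ.real {ω | A n ω = b} := by rw [setIntegral_const, smul_eq_mul, mul_comm]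

lemma measureReal_succ_eq [IsFiniteMeasure μ] (hA : ∀ m, Measurable (A m)) (hs : s ≠ 0)
    (hincr : ∀ᵐ ω ∂μ, A (n + 1) ω = A n ω ∨ A (n + 1) ω = A n ω + s)
    (hcond : μ[Set.indicator {ω' | A (n + 1) ω' = A n ω' + s} (fun _ => (1 : ℝ))
        | historySigma A n] =ᵐ[μ] fun ω => (A n ω : ℝ) / t) (a : ℕ) :
    μ.real {ω | A (n + 1) ω = a} =
      μ.real {ω | A n ω = a} + t⁻¹ * urnDrift s (fun b => μ.real {ω | A n ω = b}) a := by
  set J := {ω | A (n + 1) ω = A n ω + s}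
  have hJ : MeasurableSet J := measurableSet_eq_fun (hA (n + 1)) ((hA n).add_const s)
  have hstay : μ.real ({ω | A (n + 1) ω = a} \ J) = μ.real ({ω | A n ω = a} \ J) :=
    measureReal_congr <| Filter.eventuallyEq_set.mpr <| hincr.mono fun ω h => by
      rcases h with h | h <;> simp [J, h, hs]
  have hsplit_succ := measureReal_inter_add_sdiff (μ := μ) (s := {ω | A (n + 1) ω = a}) hJ
  have hsplit := measureReal_inter_add_sdiff (μ := μ) (s := {ω | A n ω = a}) hJ
  have hlevel := measureReal_level_inter_jump hA hcond a
  rw [div_eq_inv_mul] at hlevel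
  rcases lt_or_ge a s with h | h
  · have hempty : {ω | A (n + 1) ω = a} ∩ J = ∅ := by
      ext ω
      simp only [J, Set.mem_inter_iff, Set.mem_ofPred_eq, Set.mem_empty_iff_false, iff_false]
      omega
    rw [urnDrift_apply_of_lt _ h]
    rw [hempty, measureReal_empty] at hsplit_succ
    linarith
  · obtain ⟨b, rfl⟩ := Nat.exists_eq_add_of_le' h
    have hjump : {ω | A (n + 1) ω = b + s} ∩ J = {ω | A n ω = b} ∩ J := by
      ext ω
      simp only [J, Set.mem_inter_iff, Set.mem_ofPred_eq]
      omega
    have hlevel_b := measureReal_level_inter_jump hA hcond b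
    rw [div_eq_inv_mul] at hlevel_b
    rw [urnDrift_apply_add]
    rw [hjump] at hsplit_succ
    linarith

end OneStep

theorem measureReal_eq_urnLaw {Ω : Type*} [MeasurableSpace Ω] {μ : Measure Ω}
    [IsProbabilityMeasure μ] {A : ℕ → Ω → ℕ} {s a₀ b₀ : ℕ} (hA : ∀ m, Measurable (A m))
    (hs : s ≠ 0) (hinit : ∀ ω, A 0 ω = a₀)
    (hincr : ∀ n, ∀ᵐ ω ∂μ, A (n + 1) ω = A n ω ∨ A (n + 1) ω = A n ω + s)
    (hcond : ∀ n, μ[Set.indicator {ω' | A (n + 1) ω' = A n ω' + s} (fun _ => (1 : ℝ))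
        | historySigma A n] =ᵐ[μ] fun ω => (A n ω : ℝ) / (a₀ + b₀ + 2 * n)) (n : ℕ) :
    (fun a => μ.real {ω | A n ω = a}) = urnLaw s a₀ b₀ n := by
  induction n with
  | zero =>
    ext a
    rcases eq_or_ne a a₀ with rfl | ha
    · simp [hinit, urnLaw_zero]
    · simp [hinit, urnLaw_zero, ha, Ne.symm ha]
  | succ n ih =>
    ext a
    rw [measureReal_succ_eq hA hs (hincr n) (hcond n), urnLaw_succ, ← ih]
    rfl

theorem PolyaUrn112.measureReal_eq_urnLaw {Ω : Type*} [MeasurableSpace Ω] {μ : Measure Ω}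
    [IsProbabilityMeasure μ] {a₀ b₀ : ℕ} (U : PolyaUrn112 μ a₀ b₀) (n a : ℕ) :
    μ.real {ω | U.A n ω = a} = urnLaw 1 a₀ b₀ n a :=
  congrFun (_root_.measureReal_eq_urnLaw U.meas one_ne_zero U.init U.incr U.cond n) a

theorem PolyaUrn2002.measureReal_eq_urnLaw {Ω : Type*} [MeasurableSpace Ω] {μ : Measure Ω}
    [IsProbabilityMeasure μ] {a₀ b₀ : ℕ} (U : PolyaUrn2002 μ a₀ b₀) (n a : ℕ) :
    μ.real {ω | U.A n ω = a} = urnLaw 2 a₀ b₀ n a :=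
  congrFun (_root_.measureReal_eq_urnLaw U.meas two_ne_zero U.init U.incr U.cond n) a

lemma sum_urnLaw_two_succ_smul {M : Type*} [AddCommGroup M] [Module ℝ M]
    (a₀ b₀ n : ℕ) (f : ℕ → M) :
    ∑ i ∈ range (n + 2), urnLaw 2 a₀ b₀ (n + 1) (a₀ + 2 * i) • f i =
      ∑ i ∈ range (n + 1), urnLaw 2 a₀ b₀ n (a₀ + 2 * i) • f i +
        (a₀ + b₀ + 2 * n : ℝ)⁻¹ • ∑ i ∈ range (n + 1),
          ((a₀ + 2 * i : ℕ) * urnLaw 2 a₀ b₀ n (a₀ + 2 * i)) • (f (i + 1) - f i) := by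
  set t : ℝ := a₀ + b₀ + 2 * n
  set g : ℕ → ℝ := fun i => urnLaw 2 a₀ b₀ n (a₀ + 2 * i)
  -- `t⁻¹ * c i` is the mass moving from `a₀ + 2 i` to `a₀ + 2 (i + 1)`; summing by parts moves
  -- the difference `c (i - 1) - c i` onto `f`.
  set c : ℕ → ℝ := fun i => (a₀ + 2 * i : ℕ) * g i
  have hg_zero : urnLaw 2 a₀ b₀ (n + 1) (a₀ + 2 * 0) = g 0 - t⁻¹ * c 0 := by
    rw [urnLaw_succ, Pi.add_apply, Pi.smul_apply, smul_eq_mul]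
    rcases lt_or_ge a₀ 2 with h | h
    · rw [urnDrift_apply_of_lt _ (by omega)]
      simp [g, c]
      ring
    · obtain ⟨b, rfl⟩ := Nat.exists_eq_add_of_le' h
      rw [mul_zero, add_zero, urnDrift_apply_add, urnLaw_eq_zero_of_lt (a := b) n (by omega)]
      simp [g, c, t]
      ring
  have hg_succ (i : ℕ) : urnLaw 2 a₀ b₀ (n + 1) (a₀ + 2 * (i + 1)) =
      g (i + 1) + t⁻¹ * (c i - c (i + 1)) := by
    have hi : a₀ + 2 * (i + 1) = a₀ + 2 * i + 2 := by ring
    simp only [urnLaw_succ, Pi.add_apply, Pi.smul_apply, smul_eq_mul, g, c, hi,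
      urnDrift_apply_add, t]
  have hg_last : g (n + 1) = 0 := urnLaw_eq_zero_of_gt n (by omega)
  have hc_last : c (n + 1) = 0 := by simp [c, hg_last]
  show _ = ∑ i ∈ range (n + 1), g i • f i + t⁻¹ • ∑ i ∈ range (n + 1), c i • (f (i + 1) - f i)
  rw [sum_range_succ', hg_zero]
  simp only [hg_succ]
  have hg_sum : ∑ i ∈ range (n + 1), g (i + 1) • f (i + 1) + g 0 • f 0 =
      ∑ i ∈ range (n + 1), g i • f i := by
    rw [← sum_range_succ' (fun i => g i • f i), sum_range_succ, hg_last, zero_smul, add_zero]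
  have hc_sum : ∑ i ∈ range (n + 1), c (i + 1) • f (i + 1) + c 0 • f 0 =
      ∑ i ∈ range (n + 1), c i • f i := by
    rw [← sum_range_succ' (fun i => c i • f i), sum_range_succ, hc_last, zero_smul, add_zero]
  simp only [add_smul, sub_smul, mul_smul, smul_sub, sum_add_distrib, sum_sub_distrib, ← smul_sum]
  rw [← hg_sum, ← hc_sum]
  module

theorem urnLaw_one_eq_sum {a₀ : ℕ} (b₀ : ℕ) (ha₀ : 0 < a₀) (n : ℕ) :
    urnLaw 1 a₀ b₀ n = ∑ i ∈ range (n + 1), urnLaw 2 a₀ b₀ n (a₀ + 2 * i) • urnLaw 1 a₀ 0 i := by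
  induction n with
  | zero => simp [urnLaw_zero]
  | succ n ih =>
    rw [urnLaw_succ, ih, sum_urnLaw_two_succ_smul, map_sum]
    congr 2
    refine sum_congr rfl fun i _ => ?_
    have hi : (a₀ + (0 : ℕ) + 2 * i : ℝ) ≠ 0 := by positivity
    rw [map_smul, urnDrift_urnLaw i hi, smul_smul]
    push_cast
    ring_nf

theorem polya_urn_split
    {Ω : Type*} [m0 : MeasurableSpace Ω] (μ : Measure Ω) [IsProbabilityMeasure μ]
    (a₀ b₀ : ℕ) (ha₀ : 1 ≤ a₀)
    (UM : PolyaUrn112 μ a₀ b₀) (UM0 : PolyaUrn112 μ a₀ 0) (UI : PolyaUrn2002 μ a₀ b₀)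
    (n k : ℕ) :
    (μ {ω | UM.A n ω = a₀ + k}).toReal =
      ∑ i ∈ Finset.range (n + 1),
        (μ {ω | UM0.A i ω = a₀ + k}).toReal * (μ {ω | UI.A n ω = a₀ + 2 * i}).toReal := by
  simp only [← measureReal_def, UM.measureReal_eq_urnLaw, UM0.measureReal_eq_urnLaw,
    UI.measureReal_eq_urnLaw, urnLaw_one_eq_sum b₀ ha₀ n, Finset.sum_apply, Pi.smul_apply,
    smul_eq_mul, mul_comm]
end

section
/- Let (Ω, 𝓕, ℙ) be a probability space, let l ≥ 1 be an integer, and let A₀, …, A_{l−1} and B₁, …, B_{l−1} be events such that ℙ[Ā₀ ∩ … ∩ Ā_{i−1} ∩ Bᵢ] > 0 for every 1 ≤ i ≤ l−1 (where Ē denotes the complement of an event E). Then ℙ[Ā₀ ∩ Ā₁ ∩ … ∩ Ā_{l−1}] ≤ ∑_{i=1}^{l−1} ℙ[B̄ᵢ] + ∏_{i=1}^{l−1} ℙ[Āᵢ | Ā₀ ∩ … ∩ Ā_{i−1} ∩ Bᵢ]. -/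
/-!
Write `Cᵢ = Ā₀ ∩ … ∩ Ā_{i-1}` and `pᵢ = ℙ[Āᵢ | Cᵢ ∩ Bᵢ]`. Splitting `C_{i+1} = Āᵢ ∩ Cᵢ` according to
whether `Bᵢ` occurs gives `ℙ[C_{i+1}] ≤ ℙ[B̄ᵢ] + pᵢ ℙ[Cᵢ]`, and since `pᵢ ≤ 1` this one-step bound
iterates to the claim.
-/

open MeasureTheory ProbabilityTheory Finset

section

variable {Ω : Type*} [MeasurableSpace Ω] {μ : Measure Ω}

lemma measure_inter_le_cond_mul [IsFiniteMeasure μ] (s t : Set Ω) :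
    μ (s ∩ t) ≤ μ[t | s] * μ s :=
  calc μ (s ∩ t) ≤ μ (toMeasurable μ s ∩ t) :=
        measure_mono (Set.inter_subset_inter_left _ (subset_toMeasurable μ s))
    _ = μ[t | toMeasurable μ s] * μ (toMeasurable μ s) :=
        (cond_mul_eq_inter (measurableSet_toMeasurable μ s) t μ).symm
    _ = μ[t | s] * μ s := by rw [cond_toMeasurable_eq, measure_toMeasurable]

lemma measure_inter_le_measure_compl_add_cond_mul [IsFiniteMeasure μ] (s t b : Set Ω) :
    μ (t ∩ s) ≤ μ bᶜ + μ[t | s ∩ b] * μ s := by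
  have hsplit : t ∩ s ⊆ bᶜ ∪ (s ∩ b) ∩ t := by
    rintro x ⟨hxt, hxs⟩
    by_cases hxb : x ∈ b
    · exact Or.inr ⟨⟨hxs, hxb⟩, hxt⟩
    · exact Or.inl hxb
  calc μ (t ∩ s) ≤ μ bᶜ + μ ((s ∩ b) ∩ t) := (measure_mono hsplit).trans (measure_union_le _ _)
    _ ≤ μ bᶜ + μ[t | s ∩ b] * μ (s ∩ b) := by gcongr; exact measure_inter_le_cond_mul _ _
    _ ≤ μ bᶜ + μ[t | s ∩ b] * μ s := by gcongr; exact Set.inter_subset_left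

lemma measure_iInter_compl_le_sum_add_prod_cond [IsProbabilityMeasure μ] (A B : ℕ → Set Ω)
    (n : ℕ) :
    μ (⋂ i ∈ range (n + 1), (A i)ᶜ) ≤
      ∑ i ∈ Icc 1 n, μ (B i)ᶜ + ∏ i ∈ Icc 1 n, μ[(A i)ᶜ | (⋂ j ∈ range i, (A j)ᶜ) ∩ B i] := by
  induction n with
  | zero => simp [prob_le_one]
  | succ n ih =>
    set C := ⋂ i ∈ range (n + 1), (A i)ᶜ
    set p := μ[(A (n + 1))ᶜ | C ∩ B (n + 1)]
    set S := ∑ i ∈ Icc 1 n, μ (B i)ᶜ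
    set P := ∏ i ∈ Icc 1 n, μ[(A i)ᶜ | (⋂ j ∈ range i, (A j)ᶜ) ∩ B i]
    rw [sum_Icc_succ_top (Nat.le_add_left 1 n), prod_Icc_succ_top (Nat.le_add_left 1 n),
      range_add_one, Finset.set_biInter_insert]
    have hp : p ≤ 1 := prob_le_one
    calc μ ((A (n + 1))ᶜ ∩ C) ≤ μ (B (n + 1))ᶜ + p * μ C :=
          measure_inter_le_measure_compl_add_cond_mul _ _ _
      _ ≤ μ (B (n + 1))ᶜ + p * (S + P) := by gcongr
      _ ≤ μ (B (n + 1))ᶜ + (S + P * p) := by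
          rw [mul_add, mul_comm p P]
          gcongr
          exact mul_le_of_le_one_left' hp
      _ = S + μ (B (n + 1))ᶜ + P * p := by ring

end

theorem sequence_events_bound_general
    {Ω : Type*} [m0 : MeasurableSpace Ω] (μ : Measure Ω) [IsProbabilityMeasure μ]
    (l : ℕ) (A B : ℕ → Set Ω) :
    (μ (⋂ i ∈ Finset.range l, (A i)ᶜ)).toReal ≤
      (∑ i ∈ Finset.Icc 1 (l - 1), (μ (B i)ᶜ).toReal) +
      ∏ i ∈ Finset.Icc 1 (l - 1),
        (μ[|(⋂ j ∈ Finset.range i, (A j)ᶜ) ∩ B i] (A i)ᶜ).toReal := by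
  cases l with
  | zero => simp
  | succ n =>
    have hbound := measure_iInter_compl_le_sum_add_prod_cond (μ := μ) A B n
    have hsum : ∑ i ∈ Icc 1 n, μ (B i)ᶜ ≠ ⊤ := ENNReal.sum_ne_top.2 fun _ _ => measure_ne_top _ _
    have hprod : ∏ i ∈ Icc 1 n, μ[(A i)ᶜ | (⋂ j ∈ range i, (A j)ᶜ) ∩ B i] ≠ ⊤ :=
      ENNReal.prod_ne_top fun _ _ => measure_ne_top _ _
    have hreal := ENNReal.toReal_mono (ENNReal.add_ne_top.2 ⟨hsum, hprod⟩) hbound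
    rwa [ENNReal.toReal_add hsum hprod, ENNReal.toReal_sum fun _ _ => measure_ne_top _ _,
      ENNReal.toReal_prod] at hreal

theorem sequence_events_bound
    {Ω : Type*} [m0 : MeasurableSpace Ω] (μ : Measure Ω) [IsProbabilityMeasure μ]
    (l : ℕ) (hl : 1 ≤ l) (A B : ℕ → Set Ω)
    (hpos : ∀ i : ℕ, 1 ≤ i → i ≤ l - 1 →
      0 < μ ((⋂ j ∈ Finset.range i, (A j)ᶜ) ∩ B i)) :
    (μ (⋂ i ∈ Finset.range l, (A i)ᶜ)).toReal ≤
      (∑ i ∈ Finset.Icc 1 (l - 1), (μ (B i)ᶜ).toReal) +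
      ∏ i ∈ Finset.Icc 1 (l - 1),
        (μ[|(⋂ j ∈ Finset.range i, (A j)ᶜ) ∩ B i] (A i)ᶜ).toReal :=
  sequence_events_bound_general (m0 := m0) μ l A B
end

section
/- For all integers n ≥ 1 and k with 1 ≤ k ≤ n: ∑_{i=0}^{k} (−1)^i · C(k, i) · b(n − i/2 − 1, n) = (k/n) · 2^{k} · C(2n − k − 1, n − 1) / C(2n, n) · Γ(n + 1/2) / (Γ(n + 1) · Γ(1/2)), where C(·,·) is the ordinary binomial coefficient, Γ is the real Gamma function, and for a real number x and a natural number n, b(x, n) := (∏_{j=0}^{n−1} (x − j)) / n! is the generalized (descending-factorial) binomial coefficient. -/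
/-!
`b(x, n)` is `Ring.choose x n`, and with `Δ` the forward difference of step `-1/2` the sum is
`(-1)^k Δ^k b(·, n)` evaluated at `n - 1`. Pascal's rule `b(y, n+1) = b(y-1, n+1) + b(y-1, n)` says
`(2Δ + Δ²) b(·, n+1) = -b(· - 1, n)`, a three-term recursion in `(n, k)`. The closed form
`(-2)^k (C(2n-k-1, n-1) - C(2n-k-1, n)) / 4^n` obeys the same recursion by Pascal's rule for ordinary
binomials, and agrees with it at `k = 0` (where both vanish) and at `k = 1`, where the half-integer
value `b(n - 3/2, n) = -2 C(2n-2, n-1) / (n 4^n)` enters. The ballot-number identity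
`n (C(2n-k-1, n-1) - C(2n-k-1, n)) = k C(2n-k-1, n-1)` and `Γ(n + 1/2) = C(2n, n) n! √π / 4^n`
turn this into the stated form.
-/

open Finset Real

/-- The generalized (descending-factorial) binomial coefficient
`b(x, n) = (∏_{j=0}^{n−1} (x − j)) / n!` for a real `x` and a natural number `n`. -/
noncomputable def genBinom (x : ℝ) (n : ℕ) : ℝ :=
  (∏ j ∈ Finset.range n, (x - j)) / n.factorial

open fwdDiff Nat Function

lemma genBinom_eq_choose (x : ℝ) (n : ℕ) : genBinom x n = Ring.choose x n := by
  rw [Ring.choose_eq_smul, genBinom, div_eq_inv_mul, smul_eq_mul,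
    ← descPochhammer_eval_eq_prod_range, ← descPochhammer_map (algebraMap ℤ ℝ),
    Polynomial.eval_map_algebraMap, Polynomial.aeval_eq_smeval]

lemma Ring.succ_mul_choose_succ_succ {R : Type*} [CommRing R] [BinomialRing R] (r : R) (n : ℕ) :
    (n + 1) * Ring.choose (r + 1) (n + 1) = (r + 1) * Ring.choose r n := by
  simpa [Ring.choose_one_right] using Ring.choose_smul_choose (r + 1) (Nat.le_add_left 1 n)

lemma choose_natCast_sub_half_succ (p : ℕ) :
    Ring.choose ((p : ℝ) - 1 / 2) (p + 1) = -(2 * centralBinom p / ((p + 1) * 4 ^ (p + 1))) := by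
  induction p with
  | zero => norm_num [Ring.choose_one_right]
  | succ p ih =>
    have hcb : (centralBinom (p + 1) : ℝ) = 2 * (2 * p + 1) * centralBinom p / (p + 1) := by
      rw [eq_div_iff (by positivity), mul_comm]
      exact_mod_cast succ_mul_centralBinom_succ p
    have habs := Ring.succ_mul_choose_succ_succ ((p : ℝ) - 1 / 2) (p + 1)
    rw [ih, show (p : ℝ) - 1 / 2 + 1 = ((p + 1 : ℕ) : ℝ) - 1 / 2 by push_cast; ring] at habs
    generalize Ring.choose (((p + 1 : ℕ) : ℝ) - 1 / 2) (p + 1 + 1) = c at habs ⊢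
    rw [hcb]
    push_cast at habs ⊢
    field_simp at habs ⊢
    rw [pow_succ]
    linear_combination 4 * habs

lemma Gamma_nat_add_half_eq_centralBinom (n : ℕ) :
    Gamma (n + 1 / 2) = centralBinom n * n ! / 4 ^ n * √π := by
  induction n with
  | zero => simp [-one_div, Gamma_one_half_eq]
  | succ n ih =>
    have h : ((n : ℝ) + 1) * centralBinom (n + 1) = 2 * (2 * n + 1) * centralBinom n := by
      exact_mod_cast succ_mul_centralBinom_succ n
    rw [Nat.cast_succ, add_right_comm, Gamma_add_one (by positivity), ih, factorial_succ]
    field_simp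
    push_cast
    rw [pow_succ]
    linear_combination (-2 * 4 ^ n * (n ! : ℝ)) * h

lemma choose_sub_choose_succ_mul_succ {m p k : ℕ} (h : m + k = 2 * p + 1) :
    ((m.choose p : ℝ) - m.choose (p + 1)) * (p + 1) = k * m.choose p := by
  rcases le_or_gt p m with hpm | hmp
  · have h' : (m.choose (p + 1) : ℝ) * (p + 1) = m.choose p * (m - p : ℕ) := by
      exact_mod_cast Nat.choose_succ_right_eq m p
    rw [Nat.cast_sub hpm] at h'
    have hk : (k : ℝ) = 2 * p + 1 - m := by
      rw [eq_sub_iff_add_eq, add_comm]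
      exact_mod_cast h
    rw [hk]
    linear_combination -h'
  · simp [Nat.choose_eq_zero_of_lt hmp, Nat.choose_eq_zero_of_lt (hmp.trans (lt_succ_self p))]

lemma sum_neg_one_pow_mul_choose_mul_eq_fwdDiff_iter (f : ℝ → ℝ) (h y : ℝ) (k : ℕ) :
    ∑ i ∈ range (k + 1), (-1) ^ i * (k.choose i : ℝ) * f (y + i * h) =
      (-1) ^ k * (Δ_[h])^[k] f y := by
  rw [fwdDiff_iter_eq_sum_shift, mul_sum]
  refine sum_congr rfl fun i hi ↦ ?_
  have hsign : ((-1 : ℝ) ^ k) = (-1) ^ i * (-1) ^ (k - i) := by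
    rw [← pow_add, Nat.add_sub_cancel' (mem_range_succ_iff.mp hi)]
  have hsq : ((-1 : ℝ) ^ (k - i)) * (-1) ^ (k - i) = 1 := by
    rw [← mul_pow, neg_one_mul, neg_neg, one_pow]
  rw [zsmul_eq_mul, nsmul_eq_mul, hsign]
  push_cast
  linear_combination -(-1 : ℝ) ^ i * (k.choose i : ℝ) * f (y + i * h) * hsq

lemma fwdDiff_iter_choose_add_two (x : ℝ) (n k : ℕ) :
    (Δ_[-1 / 2])^[k + 2] (fun y : ℝ ↦ Ring.choose y (n + 1)) x =
      -2 * (Δ_[-1 / 2])^[k + 1] (fun y : ℝ ↦ Ring.choose y (n + 1)) x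
        - (Δ_[-1 / 2])^[k] (fun y : ℝ ↦ Ring.choose y n) (x - 1) := by
  have hpascal : Δ_[-1 / 2] (Δ_[-1 / 2] fun y : ℝ ↦ Ring.choose y (n + 1)) =
      (-2 : ℝ) • (Δ_[-1 / 2] fun y : ℝ ↦ Ring.choose y (n + 1))
        + (-1 : ℝ) • fun y ↦ Ring.choose (y + -1) n := by
    funext y
    have h := Ring.choose_succ_succ (y + -1) n
    rw [neg_add_cancel_right] at h
    simp only [fwdDiff, Pi.add_apply, Pi.smul_apply, smul_eq_mul]
    rw [show y + -1 / 2 + -1 / 2 = y + -1 by ring]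
    linear_combination -h
  have hshift := fwdDiff_iter_comp_add (-1 / 2) (fun y : ℝ ↦ Ring.choose y n) (-1) k x
  rw [iterate_succ_apply, iterate_succ_apply, hpascal, fwdDiff_iter_add, fwdDiff_iter_const_smul,
    fwdDiff_iter_const_smul, Pi.add_apply, Pi.smul_apply, Pi.smul_apply, ← iterate_succ_apply,
    hshift, smul_eq_mul, smul_eq_mul, sub_eq_add_neg x]
  ring

lemma fwdDiff_iter_choose_natCast (n k : ℕ) (hk : k ≤ n + 1) :
    (Δ_[-1 / 2])^[k] (fun y : ℝ ↦ Ring.choose y (n + 1)) n =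
      (-2) ^ k * (((2 * n + 1 - k).choose n : ℝ) - (2 * n + 1 - k).choose (n + 1)) / 4 ^ (n + 1) := by
  induction k using Nat.twoStepInduction generalizing n with
  | zero => simp [Ring.choose_natCast, Nat.choose_symm_half]
  | one =>
    have hballot := choose_sub_choose_succ_mul_succ (m := 2 * n) (p := n) (k := 1) rfl
    rw [← centralBinom_eq_two_mul_choose, Nat.cast_one, one_mul] at hballot
    rw [iterate_one, fwdDiff, show (n : ℝ) + -1 / 2 = n - 1 / 2 by ring,
      choose_natCast_sub_half_succ, Ring.choose_natCast, Nat.choose_succ_self, Nat.add_sub_cancel,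
      ← centralBinom_eq_two_mul_choose]
    field_simp
    linear_combination 2 * hballot
  | more k ih₀ ih₁ =>
    obtain ⟨n, rfl⟩ : ∃ m, n = m + 1 := ⟨n - 1, by omega⟩
    rw [fwdDiff_iter_choose_add_two, Nat.cast_succ, add_sub_cancel_right, ← Nat.cast_succ,
      ih₁ (n + 1) (by omega), ih₀ n (by omega),
      show 2 * (n + 1) + 1 - (k + 1) = (2 * n + 1 - k) + 1 by omega,
      show 2 * (n + 1) + 1 - (k + 2) = 2 * n + 1 - k by omega,
      Nat.choose_succ_succ', Nat.choose_succ_succ' _ (n + 1)]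
    push_cast
    ring

theorem alternating_sum_identity (n k : ℕ) (hk : 1 ≤ k) (hkn : k ≤ n) :
    (∑ i ∈ Finset.range (k + 1),
        (-1 : ℝ) ^ i * (k.choose i) * genBinom ((n : ℝ) - i / 2 - 1) n) =
      ((k : ℝ) / n) * 2 ^ k * ((2 * n - k - 1).choose (n - 1) : ℝ) /
          ((2 * n).choose n : ℝ) *
        Real.Gamma ((n : ℝ) + 1 / 2) / (Real.Gamma ((n : ℝ) + 1) * Real.Gamma (1 / 2)) := by
  obtain ⟨p, rfl⟩ : ∃ p, n = p + 1 := ⟨n - 1, by omega⟩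
  have hsum : ∑ i ∈ range (k + 1),
        (-1 : ℝ) ^ i * (k.choose i) * genBinom (((p + 1 : ℕ) : ℝ) - i / 2 - 1) (p + 1) =
      (-1) ^ k * (Δ_[-1 / 2])^[k] (fun y : ℝ ↦ Ring.choose y (p + 1)) p := by
    rw [← sum_neg_one_pow_mul_choose_mul_eq_fwdDiff_iter]
    refine sum_congr rfl fun i _ ↦ ?_
    rw [genBinom_eq_choose]
    congr 2
    push_cast
    ring
  have hballot := choose_sub_choose_succ_mul_succ (m := 2 * p + 1 - k) (p := p) (k := k) (by omega)
  have hsign : (-1 : ℝ) ^ k * (-2) ^ k = 2 ^ k := by rw [← mul_pow]; norm_num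
  have hcb : (centralBinom (p + 1) : ℝ) ≠ 0 := Nat.cast_ne_zero.mpr (centralBinom_ne_zero _)
  rw [hsum, fwdDiff_iter_choose_natCast p k hkn, Gamma_nat_eq_factorial,
    Gamma_nat_add_half_eq_centralBinom, Gamma_one_half_eq, ← centralBinom_eq_two_mul_choose,
    show 2 * (p + 1) - k - 1 = 2 * p + 1 - k by omega, Nat.add_sub_cancel]
  field_simp
  push_cast
  linear_combination
    (((2 * p + 1 - k).choose p : ℝ) - (2 * p + 1 - k).choose (p + 1)) * (p + 1) * hsign
      + 2 ^ k * hballot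
end

section
/- Let 0 < ε ≤ 1/40 be real and let δᵢ = ε/i^{2/3} for each integer i ≥ 1. Then for every integer k ≥ 1: ∏_{i=1}^{k−1} (1 + δᵢ/2 − 2δᵢ²) ≥ e^{−ε/2} · √( ∏_{i=1}^{k−1} (1 + δᵢ) ). -/
/-!
Termwise, `exp (-5 δ²) * √(1 + δ) ≤ 1 + δ/2 - 2δ²` for `0 ≤ δ ≤ 1/40`, so it suffices that
`∑ 5 δᵢ² ≤ ε/2`. Since `δᵢ² = ε² i^(-4/3)` and `∑ i^(-4/3) ≤ 4` by telescoping, that sum is at most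
`20 ε² ≤ ε/2`.
-/

open Finset Real

lemma rpow_one_div_three_pow {x : ℝ} (hx : 0 ≤ x) (n : ℕ) :
    (x ^ ((1 : ℝ) / 3)) ^ n = x ^ ((n : ℝ) / 3) := by
  rw [← rpow_mul_natCast hx]
  ring_nf

lemma one_div_pow_four_le_of_pow_three_sub_pow_three {u v : ℝ} (hu : 0 < u) (huv : u ≤ v)
    (h : v ^ 3 - u ^ 3 = 1) : 1 / v ^ 4 ≤ 3 / u - 3 / v := by
  have hv : 0 < v := hu.trans_le huv
  have hgap : 1 ≤ 3 * v ^ 2 * (v - u) := by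
    nlinarith [mul_nonneg (mul_nonneg (sub_nonneg.2 huv) (sub_nonneg.2 huv))
      (by positivity : 0 ≤ 2 * v + u)]
  rw [div_sub_div _ _ hu.ne' hv.ne', div_le_div_iff₀ (by positivity) (by positivity)]
  nlinarith [mul_le_mul_of_nonneg_left hgap (by positivity : 0 ≤ u * v ^ 2),
    mul_le_mul_of_nonneg_left huv (by positivity : 0 ≤ v ^ 3)]

/-- Telescoping against `3 / i ^ (1/3)`, the discrete analogue of `∫₁ⁿ x ^ (-4/3) dx ≤ 3`. -/
lemma sum_Icc_one_div_rpow_four_div_three_le (n : ℕ) (hn : 1 ≤ n) :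
    ∑ i ∈ Icc 1 n, 1 / (i : ℝ) ^ ((4 : ℝ) / 3) ≤ 4 - 3 / (n : ℝ) ^ ((1 : ℝ) / 3) := by
  induction n, hn using Nat.le_induction with
  | base => norm_num
  | succ m hm ih =>
    rw [sum_Icc_succ_top (by omega)]
    set u := (m : ℝ) ^ ((1 : ℝ) / 3)
    set v := ((m + 1 : ℕ) : ℝ) ^ ((1 : ℝ) / 3)
    have hu : 0 < u := by positivity
    have hcube : v ^ 3 - u ^ 3 = 1 := by
      rw [rpow_one_div_three_pow (by positivity), rpow_one_div_three_pow (by positivity)]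
      norm_num
    have huv : u ≤ v := by
      apply rpow_le_rpow (by positivity) (by push_cast; linarith) (by norm_num)
    have hv4 : ((m + 1 : ℕ) : ℝ) ^ ((4 : ℝ) / 3) = v ^ 4 := by
      rw [rpow_one_div_three_pow (by positivity)]
      norm_num
    rw [hv4]
    linarith [one_div_pow_four_le_of_pow_three_sub_pow_three hu huv hcube]

lemma sum_Icc_one_div_rpow_four_div_three_le_four (n : ℕ) :
    ∑ i ∈ Icc 1 n, 1 / (i : ℝ) ^ ((4 : ℝ) / 3) ≤ 4 := by
  rcases Nat.eq_zero_or_pos n with rfl | hn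
  · simp
  · linarith [sum_Icc_one_div_rpow_four_div_three_le n hn,
      (by positivity : 0 < 3 / (n : ℝ) ^ ((1 : ℝ) / 3))]

lemma exp_neg_mul_sqrt_one_add_le {d : ℝ} (hd0 : 0 ≤ d) (hd : d ≤ 1 / 40) :
    exp (-(5 * d ^ 2)) * √(1 + d) ≤ 1 + d / 2 - 2 * d ^ 2 := by
  have hexp : exp (-(5 * d ^ 2)) ≤ (1 + 5 * d ^ 2)⁻¹ := by
    rw [exp_neg]
    exact inv_anti₀ (by positivity) (by linarith [add_one_le_exp (5 * d ^ 2)])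
  have hsqrt : √(1 + d) ≤ 1 + d / 2 := sqrt_le_iff.2 ⟨by linarith, by nlinarith⟩
  calc exp (-(5 * d ^ 2)) * √(1 + d) ≤ (1 + 5 * d ^ 2)⁻¹ * (1 + d / 2) :=
        mul_le_mul hexp hsqrt (sqrt_nonneg _) (by positivity)
    _ = (1 + d / 2) / (1 + 5 * d ^ 2) := by ring
    _ ≤ 1 + d / 2 - 2 * d ^ 2 := by
        rw [div_le_iff₀ (by positivity)]
        nlinarith [mul_le_mul_of_nonneg_left hd (by positivity : 0 ≤ d ^ 3)]

lemma exp_neg_mul_sqrt_prod_le_prod {ι : Type*} (s : Finset ι) {a f g : ι → ℝ} {A : ℝ}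
    (hA : ∑ i ∈ s, a i ≤ A) (hf : ∀ i ∈ s, 0 ≤ f i)
    (hfg : ∀ i ∈ s, exp (-a i) * √(f i) ≤ g i) :
    exp (-A) * √(∏ i ∈ s, f i) ≤ ∏ i ∈ s, g i :=
  calc exp (-A) * √(∏ i ∈ s, f i) ≤ (∏ i ∈ s, exp (-a i)) * ∏ i ∈ s, √(f i) := by
        rw [← exp_sum, sum_neg_distrib, sqrt_prod s hf]
        gcongr
    _ = ∏ i ∈ s, exp (-a i) * √(f i) := prod_mul_distrib.symm
    _ ≤ ∏ i ∈ s, g i := prod_le_prod (fun _ _ => by positivity) hfg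

theorem product_lower_bound_general
    (ε : ℝ) (hε0 : 0 < ε) (hε : ε ≤ 1 / 40)
    (δ : ℕ → ℝ) (hδ : ∀ i : ℕ, δ i = ε / (i : ℝ) ^ ((2 : ℝ) / 3))
    (k : ℕ) :
    Real.exp (-ε / 2) * Real.sqrt (∏ i ∈ Finset.Icc 1 (k - 1), (1 + δ i)) ≤
      ∏ i ∈ Finset.Icc 1 (k - 1), (1 + δ i / 2 - 2 * δ i ^ 2) := by
  have hδ_mem : ∀ i ∈ Icc 1 (k - 1), 0 ≤ δ i ∧ δ i ≤ ε := fun i hi => by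
    have hi : (1 : ℝ) ≤ i := by exact_mod_cast (mem_Icc.1 hi).1
    rw [hδ]
    exact ⟨by positivity, div_le_self hε0.le (one_le_rpow hi (by norm_num))⟩
  have hδ_sq : ∀ i, δ i ^ 2 = ε ^ 2 * (1 / (i : ℝ) ^ ((4 : ℝ) / 3)) := fun i => by
    rw [hδ, div_pow, ← rpow_mul_natCast (Nat.cast_nonneg i)]
    norm_num [div_eq_mul_inv]
  have hsum : ∑ i ∈ Icc 1 (k - 1), 5 * δ i ^ 2 ≤ ε / 2 := by
    simp only [hδ_sq, ← mul_sum]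
    nlinarith [sum_Icc_one_div_rpow_four_div_three_le_four (k - 1)]
  rw [neg_div]
  exact exp_neg_mul_sqrt_prod_le_prod _ hsum (fun i hi => by linarith [hδ_mem i hi])
    fun i hi => exp_neg_mul_sqrt_one_add_le (hδ_mem i hi).1 ((hδ_mem i hi).2.trans hε)

theorem product_lower_bound
    (ε : ℝ) (hε0 : 0 < ε) (hε : ε ≤ 1 / 40)
    (δ : ℕ → ℝ) (hδ : ∀ i : ℕ, δ i = ε / (i : ℝ) ^ ((2 : ℝ) / 3))
    (k : ℕ) (hk : 1 ≤ k) :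
    Real.exp (-ε / 2) * Real.sqrt (∏ i ∈ Finset.Icc 1 (k - 1), (1 + δ i)) ≤
      ∏ i ∈ Finset.Icc 1 (k - 1), (1 + δ i / 2 - 2 * δ i ^ 2) :=
  product_lower_bound_general ε hε0 hε δ hδ k
end

section
/- Let 0 < ε ≤ 1/40 be real and let δᵢ = ε/i^{2/3} for each integer i ≥ 1. Then for every integer k ≥ 1: ∏_{i=1}^{k−1} (1 + δᵢ/2 + 2δᵢ²) ≤ e^{ε/4} · √( ∏_{i=1}^{k−1} (1 + δᵢ) ). -/
/-!
Termwise, `1 + x/2 + 2x² ≤ exp(17x²/8) · √(1 + x)` for `0 ≤ x ≤ 4`, using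
`√(1 + x) ≥ 1 + x/2 - x²/8` and `exp t ≥ 1 + t`. Multiplying over `i`, the exponential
factors combine into `exp(17/8 · ε² · ∑ i^(-4/3))`, and the telescoping bound
`(m+1)^(-4/3) ≤ 3 m^(-1/3) - 3 (m+1)^(-1/3)` gives `∑ i^(-4/3) ≤ 4`, so the exponent is
at most `17 ε² / 2 ≤ ε / 4` when `ε ≤ 1/34`.
-/

open Finset Real

lemma one_add_half_add_two_sq_le_exp_mul_sqrt {x : ℝ} (hx0 : 0 ≤ x) (hx4 : x ≤ 4) :
    1 + x / 2 + 2 * x ^ 2 ≤ exp (17 / 8 * x ^ 2) * √(1 + x) := by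
  have hsqrt : 1 + x / 2 - x ^ 2 / 8 ≤ √(1 + x) := by
    apply le_sqrt_of_sq_le
    nlinarith [mul_nonneg (pow_nonneg hx0 3) (show (0 : ℝ) ≤ 8 - x by linarith)]
  have hexp : 1 + 17 / 8 * x ^ 2 ≤ exp (17 / 8 * x ^ 2) := by
    linarith [add_one_le_exp (17 / 8 * x ^ 2)]
  calc 1 + x / 2 + 2 * x ^ 2 ≤ (1 + 17 / 8 * x ^ 2) * (1 + x / 2 - x ^ 2 / 8) := by
        nlinarith [mul_nonneg (pow_nonneg hx0 3) (show (0 : ℝ) ≤ 4 - x by linarith)]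
    _ ≤ exp (17 / 8 * x ^ 2) * √(1 + x) := by
        gcongr
        nlinarith

lemma one_div_rpow_four_thirds_le_sub {x : ℝ} (hx : 0 < x) :
    1 / (x + 1) ^ (4 / 3 : ℝ) ≤ 3 / x ^ (1 / 3 : ℝ) - 3 / (x + 1) ^ (1 / 3 : ℝ) := by
  set a := x ^ (1 / 3 : ℝ)
  set b := (x + 1) ^ (1 / 3 : ℝ)
  have ha : 0 < a := by positivity
  have hab : a ≤ b := rpow_le_rpow hx.le (by linarith) (by norm_num)
  have hcube : b ^ 3 = a ^ 3 + 1 := by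
    simp only [a, b, ← rpow_mul_natCast hx.le, ← rpow_mul_natCast (by linarith : 0 ≤ x + 1)]
    norm_num
  have hb4 : (x + 1) ^ (4 / 3 : ℝ) = b ^ 4 := by
    rw [← rpow_mul_natCast (by linarith)]
    norm_num
  rw [hb4, div_sub_div _ _ ha.ne' (ha.trans_le hab).ne',
    div_le_div_iff₀ (by positivity) (by positivity)]
  have hdiff : (b - a) * (a ^ 2 + a * b + b ^ 2) = 1 := by linear_combination hcube
  have hdiff_ge : 1 ≤ 3 * (b - a) * b ^ 2 := by
    nlinarith [mul_nonneg (sub_nonneg.2 hab) (mul_nonneg (add_pos ha (ha.trans_le hab)).le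
      (sub_nonneg.2 hab))]
  nlinarith [mul_le_mul_of_nonneg_right hdiff_ge (sq_nonneg b), mul_le_mul_of_nonneg_right hab
    (ha.trans_le hab).le]

lemma sum_Icc_one_div_rpow_four_thirds_le {m : ℕ} (hm : 1 ≤ m) :
    ∑ i ∈ Icc 1 m, 1 / (i : ℝ) ^ (4 / 3 : ℝ) ≤ 4 - 3 / (m : ℝ) ^ (1 / 3 : ℝ) := by
  induction m, hm using Nat.le_induction with
  | base => norm_num
  | succ n hn ih =>
    rw [sum_Icc_succ_top (by omega)]
    have hstep := one_div_rpow_four_thirds_le_sub (x := n) (by positivity)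
    push_cast
    linarith

lemma sum_Icc_one_div_rpow_four_thirds_le_four (m : ℕ) :
    ∑ i ∈ Icc 1 m, 1 / (i : ℝ) ^ (4 / 3 : ℝ) ≤ 4 := by
  rcases Nat.eq_zero_or_pos m with rfl | hm
  · norm_num
  · linarith [sum_Icc_one_div_rpow_four_thirds_le hm,
      show 0 ≤ 3 / (m : ℝ) ^ (1 / 3 : ℝ) by positivity]

theorem product_upper_bound_general
    (ε : ℝ) (hε0 : 0 < ε) (hε : ε ≤ 1 / 40)
    (δ : ℕ → ℝ) (hδ : ∀ i : ℕ, δ i = ε / (i : ℝ) ^ ((2 : ℝ) / 3))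
    (k : ℕ) :
    (∏ i ∈ Finset.Icc 1 (k - 1), (1 + δ i / 2 + 2 * δ i ^ 2)) ≤
      Real.exp (ε / 4) * Real.sqrt (∏ i ∈ Finset.Icc 1 (k - 1), (1 + δ i)) := by
  have hδ_nonneg (i : ℕ) : 0 ≤ δ i := by rw [hδ]; positivity
  have hδ_le (i : ℕ) (hi : i ∈ Icc 1 (k - 1)) : δ i ≤ 4 := by
    have hi1 : (1 : ℝ) ≤ i := by exact_mod_cast (mem_Icc.1 hi).1
    rw [hδ]
    linarith [div_le_self hε0.le (one_le_rpow hi1 (by norm_num : (0 : ℝ) ≤ 2 / 3))]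
  have hδ_sq (i : ℕ) : δ i ^ 2 = ε ^ 2 * (1 / (i : ℝ) ^ (4 / 3 : ℝ)) := by
    rw [hδ, div_pow, ← rpow_mul_natCast (Nat.cast_nonneg i)]
    norm_num [div_eq_mul_inv]
  have hsum : ∑ i ∈ Icc 1 (k - 1), δ i ^ 2 ≤ 4 * ε ^ 2 := by
    simp only [hδ_sq, ← mul_sum]
    nlinarith [sum_Icc_one_div_rpow_four_thirds_le_four (k - 1)]
  calc ∏ i ∈ Icc 1 (k - 1), (1 + δ i / 2 + 2 * δ i ^ 2)
      ≤ ∏ i ∈ Icc 1 (k - 1), (exp (17 / 8 * δ i ^ 2) * √(1 + δ i)) :=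
        prod_le_prod (fun i _ => by positivity [hδ_nonneg i]) fun i hi =>
          one_add_half_add_two_sq_le_exp_mul_sqrt (hδ_nonneg i) (hδ_le i hi)
    _ = exp (17 / 8 * ∑ i ∈ Icc 1 (k - 1), δ i ^ 2) * √(∏ i ∈ Icc 1 (k - 1), (1 + δ i)) := by
        rw [prod_mul_distrib, mul_sum, exp_sum,
          sqrt_prod _ fun i _ => by linarith [hδ_nonneg i]]
    _ ≤ exp (ε / 4) * √(∏ i ∈ Icc 1 (k - 1), (1 + δ i)) := by
        gcongr
        nlinarith

theorem product_upper_bound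
    (ε : ℝ) (hε0 : 0 < ε) (hε : ε ≤ 1 / 40)
    (δ : ℕ → ℝ) (hδ : ∀ i : ℕ, δ i = ε / (i : ℝ) ^ ((2 : ℝ) / 3))
    (k : ℕ) (hk : 1 ≤ k) :
    (∏ i ∈ Finset.Icc 1 (k - 1), (1 + δ i / 2 + 2 * δ i ^ 2)) ≤
      Real.exp (ε / 4) * Real.sqrt (∏ i ∈ Finset.Icc 1 (k - 1), (1 + δ i)) :=
  product_upper_bound_general ε hε0 hε δ hδ k
end
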